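/- arXiv:1907.01315 — 4 statements merged into one kernel-verified Lean document; each statement's English description precedes it below -/
import Mathlib

section
/- Let S ⊆ ℕ^d be a good semigroup and E a relative good ideal of S. Then g(E) = c_E − l(E). -/
/-- The nonnegative orthant of `ℤ^d`, representing `ℕ^d`. -/
def orthD (d : ℕ) : Set (Fin d → ℤ) := {a | ∀ i, 0 ≤ a i}

/-- Property (G1): closure under componentwise minimum. -/
def MinClosedD {d : ℕ} (E : Set (Fin d → ℤ)) : Prop := ∀ a ∈ E, ∀ b ∈ E, a ⊓ b ∈ E

/-- Property (G3). -/
def G3PD {d : ℕ} (E : Set (Fin d → ℤ)) : Prop :=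
  ∀ a ∈ E, ∀ b ∈ E, a ≠ b → ∀ i, a i = b i →
    ∃ e ∈ E, a i < e i ∧ ∀ j, j ≠ i →
      (min (a j) (b j) ≤ e j ∧ (a j ≠ b j → e j = min (a j) (b j)))

/-- A good semigroup of `ℕ^d` (viewed inside `ℤ^d`). -/
def IsGoodD {d : ℕ} (S : Set (Fin d → ℤ)) : Prop :=
  S ⊆ orthD d ∧ (0 : Fin d → ℤ) ∈ S ∧ (∀ a ∈ S, ∀ b ∈ S, a + b ∈ S) ∧
  MinClosedD S ∧ (∃ δ : Fin d → ℤ, ∀ y, δ ≤ y → y ∈ S) ∧ G3PD S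

/-- A good semigroup is local if its only element with a zero coordinate is `0`. -/
def IsLocalD {d : ℕ} (S : Set (Fin d → ℤ)) : Prop := ∀ a ∈ S, (∃ i, a i = 0) → a = 0

/-- A relative good ideal of `S`. -/
def IsRelGoodIdealD {d : ℕ} (S E : Set (Fin d → ℤ)) : Prop :=
  E.Nonempty ∧ (∀ e ∈ E, ∀ s ∈ S, e + s ∈ E) ∧ (∃ a ∈ S, ∀ e ∈ E, a + e ∈ S) ∧
  MinClosedD E ∧ G3PD E

/-- A saturated chain of length `n` in `E`. -/
def IsSatChainD {d : ℕ} (E : Set (Fin d → ℤ)) (n : ℕ) (f : ℕ → (Fin d → ℤ)) : Prop :=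
  (∀ i ≤ n, f i ∈ E) ∧ (∀ i < n, f i < f (i + 1)) ∧
  (∀ i < n, ∀ c ∈ E, ¬ (f i < c ∧ c < f (i + 1)))

/-- `d_E(a,b)`: the common length of all saturated chains in `E` from `a` to `b`. -/
noncomputable def chainDistD {d : ℕ} (E : Set (Fin d → ℤ)) (a b : Fin d → ℤ) : ℕ :=
  sSup {n : ℕ | ∃ f : ℕ → (Fin d → ℤ), IsSatChainD E n f ∧ f 0 = a ∧ f n = b}

/-- The (componentwise) minimal element `e(E)` of `E`. -/
noncomputable def minElD {d : ℕ} (E : Set (Fin d → ℤ)) : Fin d → ℤ :=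
  fun i => sInf ((fun a => a i) '' E)

/-- The distance `d(E∖F)` between `F ⊆ E`: the common value of
`d_E(e(E),α) - d_F(e(F),α)` for all sufficiently large `α ∈ F`. -/
noncomputable def distD {d : ℕ} (E F : Set (Fin d → ℤ)) : ℤ :=
  sSup {z : ℤ | ∃ β : Fin d → ℤ, ∀ α ∈ F, β ≤ α →
    (chainDistD E (minElD E) α : ℤ) - (chainDistD F (minElD F) α : ℤ) = z}

/-- The conductor `c(E)`: the componentwise minimal `δ` with `δ + ℕ^d ⊆ E`. -/
noncomputable def condD {d : ℕ} (E : Set (Fin d → ℤ)) : Fin d → ℤ :=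
  fun i => sInf ((fun δ => δ i) '' {δ : Fin d → ℤ | ∀ y, δ ≤ y → y ∈ E})

/-- The conductor ideal `C(E) = {β ∈ E : β ≥ c(E)}`. -/
noncomputable def CIdealD {d : ℕ} (E : Set (Fin d → ℤ)) : Set (Fin d → ℤ) :=
  {b ∈ E | condD E ≤ b}

/-- The length `l(E) = d(E ∖ C(E))`. -/
noncomputable def glenD {d : ℕ} (E : Set (Fin d → ℤ)) : ℤ := distD E (CIdealD E)

/-- The genus `g(E) = d(ℕ^d ∖ E)`. -/
noncomputable def genusD {d : ℕ} (E : Set (Fin d → ℤ)) : ℤ := distD (orthD d) E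

/-- `c_E = c₁ + ⋯ + c_d`, the sum of the coordinates of the conductor of `E`. -/
noncomputable def cSumD {d : ℕ} (E : Set (Fin d → ℤ)) : ℤ := ∑ i, condD E i

/-!
Since a strictly increasing chain of maximal length is saturated, `d_E(a, b)` is the maximal
length of a strictly increasing chain in `E` from `a` to `b`. Above the conductor `c` the ideal
contains the whole orthant `c + ℕ^d`, and raising one coordinate of some `α ≥ c` by one raises
`d_E(e(E), α)` by exactly one: meeting a chain that ends at `α + eᵢ` with `α` collapses at most one
of its steps. Hence `d_E(e(E), α) = d_E(e(E), c) + |α| - |c|` for `α ≥ c`, where `|·|` is the sum of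
the coordinates. Both `ℕ^d` and `C(E)` are orthants, so the same formula gives
`g(E) = |c| - d_E(e(E), c)` and `l(E) = d_E(e(E), c)`.
-/

open Finset

section Chains

variable {d : ℕ} {E : Set (Fin d → ℤ)}

def coordSum (a : Fin d → ℤ) : ℤ := ∑ i, a i

theorem coordSum_strictMono : StrictMono (coordSum (d := d)) := Fintype.sum_strictMono

theorem coordSum_add_single (a : Fin d → ℤ) (i : Fin d) :
    coordSum (a + Pi.single i 1) = coordSum a + 1 := by
  simp [coordSum, sum_add_distrib]

def IsStrictChainIn (E : Set (Fin d → ℤ)) (n : ℕ) (f : ℕ → Fin d → ℤ) : Prop :=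
  (∀ k ≤ n, f k ∈ E) ∧ ∀ k < n, f k < f (k + 1)

def chainLengths (E : Set (Fin d → ℤ)) (a b : Fin d → ℤ) : Set ℕ :=
  {n | ∃ f, IsStrictChainIn E n f ∧ f 0 = a ∧ f n = b}

theorem strictMonoOn_Iic_of_lt_add_one {β : Type*} [Preorder β] {f : ℕ → β} {n : ℕ}
    (hf : ∀ k < n, f k < f (k + 1)) : StrictMonoOn f (Set.Iic n) :=
  strictMonoOn_Iic_of_lt_succ fun k hk => by simpa using hf k hk

namespace IsStrictChainIn

variable {n : ℕ} {f : ℕ → Fin d → ℤ}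

theorem of_le (hf : IsStrictChainIn E n f) {m : ℕ} (hm : m ≤ n) : IsStrictChainIn E m f :=
  ⟨fun k hk => hf.1 k (hk.trans hm), fun k hk => hf.2 k (hk.trans_le hm)⟩

theorem add_coordSum_le (hf : IsStrictChainIn E n f) : n + coordSum (f 0) ≤ coordSum (f n) := by
  induction n with
  | zero => simp
  | succ n ih =>
    have := coordSum_strictMono (hf.2 n n.lt_add_one)
    push_cast
    linarith [ih (hf.of_le n.le_succ)]

theorem sub_mem_chainLengths (hf : IsStrictChainIn E n f) {i : ℕ} (hi : i ≤ n) :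
    n - i ∈ chainLengths E (f i) (f n) :=
  ⟨fun k => f (k + i), ⟨fun k hk => hf.1 _ (by omega), fun k hk => by
    simpa [Nat.add_right_comm] using hf.2 (k + i) (by omega)⟩, by simp, by
    simp [Nat.sub_add_cancel hi]⟩

end IsStrictChainIn

theorem zero_mem_chainLengths {a : Fin d → ℤ} (ha : a ∈ E) : 0 ∈ chainLengths E a a :=
  ⟨fun _ => a, ⟨fun _ _ => ha, fun _ hk => absurd hk (Nat.not_lt_zero _)⟩, rfl, rfl⟩

theorem succ_mem_chainLengths {a b c : Fin d → ℤ} {n : ℕ} (h : n ∈ chainLengths E a b)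
    (hbc : b < c) (hc : c ∈ E) : n + 1 ∈ chainLengths E a c := by
  obtain ⟨f, hf, rfl, rfl⟩ := h
  refine ⟨fun k => if k ≤ n then f k else c, ⟨fun k hk => ?_, fun k hk => ?_⟩, by simp, by simp⟩
  · dsimp only
    split_ifs with hkn
    exacts [hf.1 k hkn, hc]
  · rcases (Nat.lt_succ_iff.1 hk).lt_or_eq with hkn | rfl
    · simpa [hkn.le, Nat.succ_le_of_lt hkn] using hf.2 k hkn
    · simpa using hbc

theorem add_mem_chainLengths {a b c : Fin d → ℤ} {m n : ℕ} (hm : m ∈ chainLengths E a b)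
    (hn : n ∈ chainLengths E b c) : m + n ∈ chainLengths E a c := by
  induction n generalizing c with
  | zero =>
    obtain ⟨f, -, rfl, rfl⟩ := hn
    exact hm
  | succ n ih =>
    obtain ⟨f, hf, rfl, rfl⟩ := hn
    exact succ_mem_chainLengths (ih ⟨f, hf.of_le n.le_succ, rfl, rfl⟩) (hf.2 n n.lt_add_one)
      (hf.1 _ le_rfl)

theorem IsStrictChainIn.succ_mem_chainLengths_of_lt_of_lt {f : ℕ → Fin d → ℤ} {n i : ℕ}
    (hf : IsStrictChainIn E n f) (hi : i < n) {c : Fin d → ℤ} (hc : c ∈ E) (hlo : f i < c)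
    (hhi : c < f (i + 1)) : n + 1 ∈ chainLengths E (f 0) (f n) := by
  have hprefix : i + 2 ∈ chainLengths E (f 0) (f (i + 1)) :=
    succ_mem_chainLengths (succ_mem_chainLengths ⟨f, hf.of_le hi.le, rfl, rfl⟩ hlo hc) hhi
      (hf.1 _ hi)
  simpa [show i + 2 + (n - (i + 1)) = n + 1 by omega] using
    add_mem_chainLengths hprefix (hf.sub_mem_chainLengths hi)

open scoped Classical in
theorem card_filter_lt_mem_chainLengths {g : ℕ → Fin d → ℤ} {n : ℕ} (hg : ∀ k ≤ n, g k ∈ E)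
    (hmono : ∀ k < n, g k ≤ g (k + 1)) :
    #{k ∈ range n | g k < g (k + 1)} ∈ chainLengths E (g 0) (g n) := by
  induction n with
  | zero => simpa using zero_mem_chainLengths (hg 0 le_rfl)
  | succ n ih =>
    have ih := ih (fun k hk => hg k (by omega)) (fun k hk => hmono k (by omega))
    rw [range_add_one, filter_insert]
    by_cases hlt : g n < g (n + 1)
    · rw [if_pos hlt, card_insert_of_notMem (by simp)]
      exact succ_mem_chainLengths ih hlt (hg _ le_rfl)
    · rwa [if_neg hlt, ← (hmono n n.lt_add_one).eq_of_not_lt hlt]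

theorem bddAbove_chainLengths (a b : Fin d → ℤ) : BddAbove (chainLengths E a b) := by
  refine ⟨(coordSum b - coordSum a).toNat, fun n ⟨f, hf, h0, hn⟩ => ?_⟩
  have := hf.add_coordSum_le
  rw [h0, hn] at this
  omega

theorem isGreatest_chainDistD {a b : Fin d → ℤ} (ha : a ∈ E) (hb : b ∈ E) (hab : a ≤ b) :
    IsGreatest (chainLengths E a b) (chainDistD E a b) := by
  have hne : (chainLengths E a b).Nonempty := by
    rcases hab.eq_or_lt with rfl | hlt
    exacts [⟨0, zero_mem_chainLengths ha⟩,
      ⟨1, succ_mem_chainLengths (zero_mem_chainLengths ha) hlt hb⟩]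
  have hbdd := bddAbove_chainLengths (E := E) a b
  have hmax : IsGreatest (chainLengths E a b) (sSup (chainLengths E a b)) :=
    ⟨Nat.sSup_mem hne hbdd, fun n hn => le_csSup hbdd hn⟩
  obtain ⟨f, hf, h0, hn⟩ := hmax.1
  have hsat : IsSatChainD E (sSup (chainLengths E a b)) f := by
    refine ⟨hf.1, hf.2, fun i hi c hc ⟨hlo, hhi⟩ => ?_⟩
    have := hmax.2 (h0 ▸ hn ▸ hf.succ_mem_chainLengths_of_lt_of_lt hi hc hlo hhi)
    omega
  have hsub : {n | ∃ f, IsSatChainD E n f ∧ f 0 = a ∧ f n = b} ⊆ chainLengths E a b :=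
    fun n ⟨f, hf, h0, hn⟩ => ⟨f, ⟨hf.1, hf.2.1⟩, h0, hn⟩
  have hsatmax : IsGreatest {n | ∃ f, IsSatChainD E n f ∧ f 0 = a ∧ f n = b}
      (sSup (chainLengths E a b)) := ⟨⟨f, hsat, h0, hn⟩, fun n hn => hmax.2 (hsub hn)⟩
  rw [chainDistD, hsatmax.csSup_eq]
  exact hmax

theorem chainDistD_self {a : Fin d → ℤ} (ha : a ∈ E) : chainDistD E a a = 0 := by
  obtain ⟨f, hf, h0, hn⟩ := (isGreatest_chainDistD ha ha le_rfl).1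
  have := hf.add_coordSum_le
  rw [h0, hn] at this
  omega

end Chains

section Conductor

variable {d : ℕ} {E : Set (Fin d → ℤ)}

theorem le_induction_add_single {c : Fin d → ℤ} {P : (Fin d → ℤ) → Prop} (base : P c)
    (step : ∀ α, c ≤ α → ∀ i, P α → P (α + Pi.single i 1)) {α : Fin d → ℤ} (hα : c ≤ α) :
    P α := by
  obtain ⟨n, hn⟩ : ∃ n : ℕ, coordSum α = coordSum c + n :=
    ⟨(coordSum α - coordSum c).toNat, by have := coordSum_strictMono.monotone hα; omega⟩
  induction n generalizing α with
  | zero =>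
    rcases hα.eq_or_lt with rfl | hlt
    · exact base
    · exact absurd hn (by simpa using (coordSum_strictMono hlt).ne')
  | succ n ih =>
    obtain ⟨-, i, hi⟩ := Pi.lt_def.1 (hα.lt_of_ne (by rintro rfl; omega))
    have hc : c ≤ α - Pi.single i 1 := fun j => by
      rcases eq_or_ne j i with rfl | hj
      · simpa using Int.le_sub_one_of_lt hi
      · simpa [hj] using hα j
    have hsum : coordSum (α - Pi.single i 1) = coordSum c + n := by
      have := coordSum_add_single (α - Pi.single i 1) i
      rw [sub_add_cancel] at this
      push_cast at hn
      omega
    simpa using step _ hc i (ih hc hsum)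

theorem inf_add_single_eq {x α : Fin d → ℤ} {i : Fin d} (hx : x ≤ α + Pi.single i 1)
    (hxα : ¬ x ≤ α) : x ⊓ α + Pi.single i 1 = x := by
  have hoff : ∀ j ≠ i, x j ≤ α j := fun j hj => by simpa [hj] using hx j
  have hi : α i < x i := by
    obtain ⟨j, hj⟩ := not_forall.1 hxα
    rcases eq_or_ne j i with rfl | h
    exacts [not_le.1 hj, absurd (hoff j h) hj]
  funext k
  rcases eq_or_ne k i with rfl | hk
  · have := hx k
    simp only [Pi.add_apply, Pi.single_eq_same] at this ⊢
    simp only [Pi.inf_apply]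
    omega
  · simp [hk, hoff k hk]

open scoped Classical in
theorem card_filter_not_inf_lt_le_one {f : ℕ → Fin d → ℤ} {n : ℕ} {α : Fin d → ℤ} {i : Fin d}
    (hf : ∀ k < n, f k < f (k + 1)) (hn : f n ≤ α + Pi.single i 1) :
    #{k ∈ range n | ¬ f k ⊓ α < f (k + 1) ⊓ α} ≤ 1 := by
  have hmono := (strictMonoOn_Iic_of_lt_add_one hf).monotoneOn
  have hle : ∀ k ≤ n, f k ≤ α + Pi.single i 1 := fun k hk =>
    (hmono (Set.mem_Iic.2 hk) (Set.mem_Iic.2 le_rfl) hk).trans hn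
  -- a collapsed step is the unique step that leaves the box below `α`
  have hstall : ∀ k < n, ¬ f k ⊓ α < f (k + 1) ⊓ α → f k ≤ α ∧ ¬ f (k + 1) ≤ α := by
    intro k hk hst
    have hout : ¬ f (k + 1) ≤ α := fun h =>
      hst (by rw [inf_eq_left.2 h]; exact inf_le_left.trans_lt (hf k hk))
    refine ⟨by_contra fun hin => (hf k hk).ne ?_, hout⟩
    rw [← inf_add_single_eq (hle k hk.le) hin, ← inf_add_single_eq (hle (k + 1) hk) hout,
      (inf_le_inf_right α (hf k hk).le).eq_of_not_lt hst]
  rw [card_le_one]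
  intro k hk k' hk'
  simp only [mem_filter, mem_range] at hk hk'
  by_contra hne
  wlog hlt : k < k' generalizing k k'
  · exact this k' k hk' hk (Ne.symm hne) (by omega)
  exact (hstall k hk.1 hk.2).2 ((hmono (Set.mem_Iic.2 (by omega)) (Set.mem_Iic.2 hk'.1.le)
    (by omega)).trans (hstall k' hk'.1 hk'.2).1)

variable {c e : Fin d → ℤ}

theorem chainDistD_add_single (hmin : MinClosedD E) (hcond : ∀ y, c ≤ y → y ∈ E)
    (he : IsLeast E e) {α : Fin d → ℤ} (hα : c ≤ α) (i : Fin d) :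
    chainDistD E e (α + Pi.single i 1) = chainDistD E e α + 1 := by
  have hαE := hcond α hα
  have hlt : α < α + Pi.single i 1 := lt_add_of_pos_right α (Pi.single_pos.2 one_pos)
  have hα'E := hcond _ (hα.trans hlt.le)
  have hdα := isGreatest_chainDistD he.1 hαE (he.2 hαE)
  have hdα' := isGreatest_chainDistD he.1 hα'E (he.2 hα'E)
  refine le_antisymm ?_ (hdα'.2 (succ_mem_chainLengths hdα.1 hlt hα'E))
  classical
  obtain ⟨f, hf, h0, hn⟩ := hdα'.1
  set n := chainDistD E e (α + Pi.single i 1)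
  have hsteps := card_filter_lt_mem_chainLengths (g := fun k => f k ⊓ α) (n := n)
    (fun k hk => hmin _ (hf.1 k hk) _ hαE) (fun k hk => inf_le_inf_right α (hf.2 k hk).le)
  simp only [h0, hn, inf_eq_left.2 (he.2 hαE), inf_eq_right.2 hlt.le] at hsteps
  have hsplit := card_filter_add_card_filter_not (s := range n)
    (fun k => f k ⊓ α < f (k + 1) ⊓ α)
  have hcollapse := card_filter_not_inf_lt_le_one hf.2 hn.le
  have := hdα.2 hsteps
  rw [card_range] at hsplit
  omega

theorem chainDistD_eq_add_coordSum_sub (hmin : MinClosedD E) (hcond : ∀ y, c ≤ y → y ∈ E)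
    (he : IsLeast E e) {α : Fin d → ℤ} (hα : c ≤ α) :
    (chainDistD E e α : ℤ) = chainDistD E e c + (coordSum α - coordSum c) := by
  refine le_induction_add_single (P := fun α =>
    (chainDistD E e α : ℤ) = chainDistD E e c + (coordSum α - coordSum c)) (by simp)
    (fun α hα i ih => ?_) hα
  rw [chainDistD_add_single hmin hcond he hα, coordSum_add_single, Nat.cast_succ, ih]
  ring

theorem chainDistD_Ici {a b : Fin d → ℤ} (hab : a ≤ b) :
    (chainDistD (Set.Ici a) a b : ℤ) = coordSum b - coordSum a := by
  have hmin : MinClosedD (Set.Ici a) := fun x hx y hy => Set.mem_Ici.2 (le_inf hx hy)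
  rw [chainDistD_eq_add_coordSum_sub hmin (fun y hy => hy) isLeast_Ici hab,
    chainDistD_self (Set.mem_Ici.2 le_rfl)]
  simp

end Conductor

section MinimalElement

variable {d : ℕ} {E : Set (Fin d → ℤ)}

theorem IsLeast.minElD_eq {a : Fin d → ℤ} (h : IsLeast E a) : minElD E = a :=
  funext fun i => ((Function.monotone_eval i).map_isLeast h).csInf_eq

theorem isLeast_minElD (hmin : MinClosedD E) (hne : E.Nonempty) (hbdd : BddBelow E) :
    IsLeast E (minElD E) := by
  have hbddi (i : Fin d) : BddBelow ((fun a => a i) '' E) :=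
    (Function.monotone_eval i).map_bddBelow hbdd
  have hlower : minElD E ∈ lowerBounds E := fun a ha i => csInf_le (hbddi i) ⟨a, ha, rfl⟩
  refine ⟨?_, hlower⟩
  choose a haE hai using fun i => Int.csInf_mem (hne.image fun a => a i) (hbddi i)
  rcases isEmpty_or_nonempty (Fin d) with hd | hd
  · exact Subsingleton.elim (minElD E) hne.some ▸ hne.some_mem
  · have hinf : univ.inf' univ_nonempty a = minElD E := funext fun j => le_antisymm
      ((inf'_le a (mem_univ j) j).trans_eq (hai j))
      (le_inf' _ _ (fun i _ => hlower (haE i)) j)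
    exact hinf ▸ inf'_mem E hmin _ _ a fun i _ => haE i

end MinimalElement

section Ideal

variable {d : ℕ} {S E : Set (Fin d → ℤ)}

theorem orthD_eq_Ici : orthD d = Set.Ici 0 := rfl

theorem IsRelGoodIdealD.bddBelow (hS : S ⊆ orthD d) (hE : IsRelGoodIdealD S E) : BddBelow E := by
  obtain ⟨a, -, haE⟩ := hE.2.2.1
  refine ⟨-a, fun e he j => ?_⟩
  have := hS (haE e he) j
  simp only [Pi.add_apply] at this
  simp only [Pi.neg_apply]
  omega

theorem minClosedD_setOf_forall_le_mem (hmin : MinClosedD E) :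
    MinClosedD {δ | ∀ y, δ ≤ y → y ∈ E} := fun δ hδ δ' hδ' y hy => by
  rw [← sup_eq_left.2 hy, sup_inf_left]
  exact hmin _ (hδ _ le_sup_right) _ (hδ' _ le_sup_right)

theorem IsRelGoodIdealD.mem_of_condD_le (hS : IsGoodD S) (hE : IsRelGoodIdealD S E)
    {y : Fin d → ℤ} (hy : condD E ≤ y) : y ∈ E := by
  obtain ⟨e, he⟩ := hE.1
  obtain ⟨δ, hδ⟩ := hS.2.2.2.2.1
  have hcand : (e + δ) ∈ {δ | ∀ y, δ ≤ y → y ∈ E} := fun y hy => by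
    simpa using hE.2.1 e he (y - e) (hδ _ (le_sub_iff_add_le'.2 hy))
  have hbdd : BddBelow {δ | ∀ y, δ ≤ y → y ∈ E} :=
    (hE.bddBelow hS.1).mono fun δ hδ => hδ δ le_rfl
  exact (isLeast_minElD (minClosedD_setOf_forall_le_mem hE.2.2.2.1) ⟨_, hcand⟩ hbdd).1 y hy

theorem CIdealD_eq_Ici (hcond : ∀ y, condD E ≤ y → y ∈ E) : CIdealD E = Set.Ici (condD E) :=
  Set.ext fun y => ⟨And.right, fun hy => ⟨hcond y hy, hy⟩⟩

end Ideal

theorem distD_eq_of_forall_le {d : ℕ} {E F : Set (Fin d → ℤ)} (hF : IsCofinal F) {z : ℤ}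
    (β : Fin d → ℤ) (h : ∀ α ∈ F, β ≤ α →
      (chainDistD E (minElD E) α : ℤ) - chainDistD F (minElD F) α = z) :
    distD E F = z := by
  suffices hset : {z : ℤ | ∃ β : Fin d → ℤ, ∀ α ∈ F, β ≤ α →
      (chainDistD E (minElD E) α : ℤ) - (chainDistD F (minElD F) α : ℤ) = z} = {z} by
    rw [distD, hset, csSup_singleton]
  refine Set.eq_singleton_iff_unique_mem.2 ⟨⟨β, h⟩, fun z' ⟨β', h'⟩ => ?_⟩
  obtain ⟨α, hαF, hα⟩ := hF (β ⊔ β')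
  rw [← h' α hαF (le_sup_right.trans hα), h α hαF (le_sup_left.trans hα)]

/-- Let `S ⊆ ℕ^d` be a good semigroup and `E` a relative good
ideal of `S`. Then `g(E) = c_E − l(E)`. -/
theorem genus_eq_condSum_sub_length {d : ℕ} (S E : Set (Fin d → ℤ))
    (hS : IsGoodD S) (hE : IsRelGoodIdealD S E) :
    genusD E = cSumD E - glenD E := by
  set c := condD E
  set e := minElD E
  have hmin : MinClosedD E := hE.2.2.2.1
  have hcond : ∀ y, c ≤ y → y ∈ E := fun y => hE.mem_of_condD_le hS
  have he : IsLeast E e := isLeast_minElD hmin hE.1 (hE.bddBelow hS.1)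
  have hdist (α) (hα : c ≤ α) := chainDistD_eq_add_coordSum_sub hmin hcond he hα
  have hgenus : genusD E = coordSum c - chainDistD E e c := by
    refine distD_eq_of_forall_le (fun β => ⟨β ⊔ c, hcond _ le_sup_right, le_sup_left⟩) (0 ⊔ c)
      fun α _ hα => ?_
    rw [orthD_eq_Ici, isLeast_Ici.minElD_eq, chainDistD_Ici (le_sup_left.trans hα),
      hdist α (le_sup_right.trans hα), show coordSum (0 : Fin d → ℤ) = 0 from sum_const_zero]
    ring
  have hlength : glenD E = chainDistD E e c := by
    refine distD_eq_of_forall_le (F := CIdealD E)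
      (fun β => ⟨β ⊔ c, ⟨hcond _ le_sup_right, le_sup_right⟩, le_sup_left⟩) c fun α _ hα => ?_
    rw [CIdealD_eq_Ici hcond, isLeast_Ici.minElD_eq, chainDistD_Ici hα, hdist α hα]
    ring
  rw [hgenus, hlength]
  rfl
end

section
/- Let S ⊆ ℕ^d be a good semigroup with conductor c(S) = (c₁,…,c_d) and let U ⊆ {1,…,d}. Then the set E^U = {α = (α₁,…,α_d) ∈ S : α_j ≥ c_j for all j ∉ U} is a relative good ideal of S. -/
/-!
The bound `α_j ≥ c_j` off `U` survives adding elements of `ℕ^d`, taking minima, and passing to the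
(G3) witness of `S`, so every axiom of a relative good ideal is inherited from `S`; the only
role of the conductor is that `δ ⊔ c(S)` lies in `E^U` for any `δ` as in (G2).
-/

/-- `E^U` is `dominatingOff S U (condD S)`. -/
def dominatingOff {d : ℕ} (S : Set (Fin d → ℤ)) (U : Set (Fin d)) (c : Fin d → ℤ) :
    Set (Fin d → ℤ) :=
  {a ∈ S | ∀ j, j ∉ U → c j ≤ a j}

section DominatingOff

variable {d : ℕ} {S : Set (Fin d → ℤ)} {U : Set (Fin d)} {c : Fin d → ℤ}

lemma dominatingOff_subset : dominatingOff S U c ⊆ S := fun _ ha => ha.1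

lemma sup_mem_dominatingOff {δ : Fin d → ℤ} (hδ : ∀ y, δ ≤ y → y ∈ S) :
    δ ⊔ c ∈ dominatingOff S U c :=
  ⟨hδ _ le_sup_left, fun j _ => le_sup_right (a := δ j)⟩

lemma add_mem_dominatingOff (hS : S ⊆ orthD d) (hadd : ∀ a ∈ S, ∀ b ∈ S, a + b ∈ S)
    {a s : Fin d → ℤ} (ha : a ∈ dominatingOff S U c) (hs : s ∈ S) :
    a + s ∈ dominatingOff S U c := by
  refine ⟨hadd a ha.1 s hs, fun j hj => ?_⟩
  have := ha.2 j hj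
  have := hS hs j
  simp only [Pi.add_apply]
  omega

lemma minClosedD_dominatingOff (hS : MinClosedD S) : MinClosedD (dominatingOff S U c) :=
  fun a ha b hb => ⟨hS a ha.1 b hb.1, fun j hj => le_inf (ha.2 j hj) (hb.2 j hj)⟩

/-- Off `i` the (G3) witness of `S` dominates `min a b ≥ c`, and at `i` it exceeds `a i ≥ c i`. -/
lemma g3PD_dominatingOff (hS : G3PD S) : G3PD (dominatingOff S U c) := by
  intro a ha b hb hab i hi
  obtain ⟨e, heS, hei, hej⟩ := hS a ha.1 b hb.1 hab i hi
  refine ⟨e, ⟨heS, fun j hj => ?_⟩, hei, hej⟩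
  by_cases hji : j = i
  · subst hji
    exact (ha.2 j hj).trans hei.le
  · exact (le_min (ha.2 j hj) (hb.2 j hj)).trans (hej j hji).1

end DominatingOff

/-- For a good semigroup `S ⊆ ℕ^d` with conductor
`c(S) = (c₁,…,c_d)` and `U ⊆ {1,…,d}`, the set
`E^U = {α ∈ S : α_j ≥ c_j for all j ∉ U}` is a relative good ideal of `S`. -/
theorem EU_isRelGoodIdeal {d : ℕ} (S : Set (Fin d → ℤ)) (hS : IsGoodD S)
    (U : Set (Fin d)) :
    IsRelGoodIdealD S {a ∈ S | ∀ j, j ∉ U → condD S j ≤ a j} := by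
  obtain ⟨hOrth, h0, hAdd, hMin, ⟨δ, hδ⟩, hG3⟩ := hS
  show IsRelGoodIdealD S (dominatingOff S U (condD S))
  exact ⟨⟨_, sup_mem_dominatingOff hδ⟩,
    fun e he s hs => add_mem_dominatingOff hOrth hAdd he hs,
    ⟨0, h0, fun e he => by simpa using dominatingOff_subset he⟩,
    minClosedD_dominatingOff hMin, g3PD_dominatingOff hG3⟩
end

section
/- Let S ⊆ ℕ² be a local good semigroup and let S₁, S₂ be its two coordinate projections (which are numerical semigroups). Then g(S) = g(S₁) + g(S₂) + |A_f(S)|, where g(S_i) = |ℕ∖S_i| is the number of gaps of S_i and A_f(S) is the set of finite maximals of S. -/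
/-- The ambient space `ℤ²`; `ℕ²` is identified with the nonnegative orthant. -/
abbrev Z2 : Type := ℤ × ℤ

/-- The nonnegative orthant, representing `ℕ² ⊆ ℤ²`. -/
def orth : Set Z2 := {a : Z2 | 0 ≤ a.1 ∧ 0 ≤ a.2}

/-- Property (G1): closure under componentwise minimum. -/
def MinClosed (E : Set Z2) : Prop := ∀ a ∈ E, ∀ b ∈ E, a ⊓ b ∈ E

/-- Property (G3). -/
def G3P (E : Set Z2) : Prop :=
  ∀ a ∈ E, ∀ b ∈ E, a ≠ b →
    (a.1 = b.1 →
      ∃ e ∈ E, a.1 < e.1 ∧ min a.2 b.2 ≤ e.2 ∧ (a.2 ≠ b.2 → e.2 = min a.2 b.2)) ∧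
    (a.2 = b.2 →
      ∃ e ∈ E, a.2 < e.2 ∧ min a.1 b.1 ≤ e.1 ∧ (a.1 ≠ b.1 → e.1 = min a.1 b.1))

/-- A good semigroup of `ℕ²` (viewed inside `ℤ²`). -/
def IsGood (S : Set Z2) : Prop :=
  S ⊆ orth ∧ (0 : Z2) ∈ S ∧ (∀ a ∈ S, ∀ b ∈ S, a + b ∈ S) ∧
  MinClosed S ∧ (∃ δ : Z2, ∀ y : Z2, δ ≤ y → y ∈ S) ∧ G3P S

/-- A good semigroup is local if its only element with a zero coordinate is `0`. -/
def IsLocal (S : Set Z2) : Prop := ∀ a ∈ S, (a.1 = 0 ∨ a.2 = 0) → a = 0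

/-- A relative good ideal of `S`. -/
def IsRelGoodIdeal (S E : Set Z2) : Prop :=
  E.Nonempty ∧ (∀ e ∈ E, ∀ s ∈ S, e + s ∈ E) ∧ (∃ a ∈ S, ∀ e ∈ E, a + e ∈ S) ∧
  MinClosed E ∧ G3P E

/-- A saturated chain of length `n` in `E`. -/
def IsSatChain (E : Set Z2) (n : ℕ) (f : ℕ → Z2) : Prop :=
  (∀ i ≤ n, f i ∈ E) ∧ (∀ i < n, f i < f (i + 1)) ∧
  (∀ i < n, ∀ c ∈ E, ¬ (f i < c ∧ c < f (i + 1)))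

/-- `d_E(a,b)`: the common length of all saturated chains in `E` from `a` to `b`. -/
noncomputable def chainDist (E : Set Z2) (a b : Z2) : ℕ :=
  sSup {n : ℕ | ∃ f : ℕ → Z2, IsSatChain E n f ∧ f 0 = a ∧ f n = b}

/-- The (componentwise) minimal element `e(E)` of `E`. -/
noncomputable def minEl (E : Set Z2) : Z2 :=
  (sInf (Prod.fst '' E), sInf (Prod.snd '' E))

/-- The distance `d(E∖F)` between `F ⊆ E`: the common value of
`d_E(e(E),α) - d_F(e(F),α)` for all sufficiently large `α ∈ F`. -/
noncomputable def dist2 (E F : Set Z2) : ℤ :=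
  sSup {z : ℤ | ∃ β : Z2, ∀ α ∈ F, β ≤ α →
    (chainDist E (minEl E) α : ℤ) - (chainDist F (minEl F) α : ℤ) = z}

/-- The conductor `c(E)`: the componentwise minimal `δ` with `δ + ℕ² ⊆ E`. -/
noncomputable def condE (E : Set Z2) : Z2 :=
  (sInf ((fun δ : Z2 => δ.1) '' {δ : Z2 | ∀ y : Z2, δ ≤ y → y ∈ E}),
   sInf ((fun δ : Z2 => δ.2) '' {δ : Z2 | ∀ y : Z2, δ ≤ y → y ∈ E}))

/-- The conductor ideal `C(E) = {β ∈ E : β ≥ c(E)}`. -/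
noncomputable def CIdeal (E : Set Z2) : Set Z2 := {b ∈ E | condE E ≤ b}

/-- The length `l(E) = d(E ∖ C(E))`. -/
noncomputable def glen (E : Set Z2) : ℤ := dist2 E (CIdeal E)

/-- The genus `g(E) = d(ℕ² ∖ E)`. -/
noncomputable def genus (E : Set Z2) : ℤ := dist2 orth E

/-- The good semigroup `ℕ²(1,1) = {0} ∪ ((1,1) + ℕ²)`. -/
def N2oneone : Set Z2 := {a : Z2 | a = 0 ∨ ((1 : ℤ), (1 : ℤ)) ≤ a}

/-- `Δ(a) = Δ₁(a) ∪ Δ₂(a)` for `a ∈ ℤ²`. -/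
def DeltaUp (a : Z2) : Set Z2 :=
  {b : Z2 | (b.1 = a.1 ∧ a.2 < b.2) ∨ (b.2 = a.2 ∧ a.1 < b.1)}

/-- `A_f(S)`: the finite maximals of `S`, i.e. `a ∈ S` with `Δ^S(a) = ∅`. -/
def Af (S : Set Z2) : Set Z2 := {a ∈ S | S ∩ DeltaUp a = ∅}

/-!
The proof runs through the rank function
`ρ(b) = |S₁ ∩ [0, b₁)| + |S₂ ∩ [0, b₂)| - |A_f(S) ∩ {m : m₁ < b₁, m₂ < b₂}|`.
Along every saturated step `β ⋖ γ` of `S` it grows by exactly one: the values of `S₁` strictly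
between `β₁` and `γ₁` are matched bijectively, via column maxima (which exist by (G3)), with the
new finite maximals to the right of `β`, similarly for `S₂`, and `β` itself is a new finite maximal
exactly when the step is diagonal. Hence `d_S(0, α) = ρ(α)`. For `ℕ²` this is `α₁ + α₂`, while
beyond the conductor of `S` it is `α₁ + α₂ - g(S₁) - g(S₂) - |A_f(S)|`.
-/

open Set

def gaps (T : Set ℤ) : Set ℤ := {x | 0 ≤ x ∧ x ∉ T}

noncomputable def countBelow (T : Set ℤ) (x : ℤ) : ℕ := (T ∩ Ico 0 x).ncard

def lowerBox (b : Z2) : Set Z2 := {m | m.1 < b.1 ∧ m.2 < b.2}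

noncomputable def chainRank (S : Set Z2) (b : Z2) : ℤ :=
  countBelow (Prod.fst '' S) b.1 + countBelow (Prod.snd '' S) b.2 - (Af S ∩ lowerBox b).ncard

def CovIn (E : Set Z2) (a b : Z2) : Prop := a < b ∧ ∀ c ∈ E, ¬(a < c ∧ c < b)

section Counting

variable {T : Set ℤ}

lemma countBelow_eq_add_ncard_Ioo {a b : ℤ} (h0 : 0 ≤ a) (hab : a ≤ b) (ha : a ∈ T) :
    (countBelow T b : ℤ) = countBelow T a + (T ∩ Ioo a b).ncard + if a < b then 1 else 0 := by
  rcases hab.eq_or_lt with rfl | hlt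
  · simp
  have hsplit : T ∩ Ico 0 b = (T ∩ Ico 0 a) ∪ (T ∩ Ico a b) := by
    rw [← inter_union_distrib_left, Ico_union_Ico_eq_Ico h0 hab]
  have hdisj : Disjoint (T ∩ Ico 0 a) (T ∩ Ico a b) :=
    disjoint_left.2 fun x hx hx' => (not_le.2 hx.2.2) hx'.2.1
  have hIco : T ∩ Ico a b = insert a (T ∩ Ioo a b) := by
    rw [← Ioo_insert_left hlt, inter_insert_of_mem ha]
  rw [countBelow, countBelow, hsplit, ncard_union_eq hdisj ((finite_Ico 0 a).inter_of_right T)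
    ((finite_Ico a b).inter_of_right T), hIco,
    ncard_insert_of_notMem (fun h => h.2.1.ne rfl) ((finite_Ioo a b).inter_of_right T), if_pos hlt]
  push_cast
  ring

lemma countBelow_eq_sub_ncard_gaps {x : ℤ} (hx : 0 ≤ x) (hT : ∀ t, x ≤ t → t ∈ T) :
    (countBelow T x : ℤ) = x - (gaps T).ncard := by
  have hgaps : gaps T = Ico 0 x \ T := by
    ext t
    simp only [gaps, mem_ofPred_eq, mem_sdiff, mem_Ico]
    exact ⟨fun ⟨h0, hn⟩ => ⟨⟨h0, not_le.1 fun h => hn (hT t h)⟩, hn⟩,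
      fun ⟨⟨h0, _⟩, hn⟩ => ⟨h0, hn⟩⟩
  have hIco : ((Ico 0 x).ncard : ℤ) = x := by
    rw [← Finset.coe_Ico, ncard_coe_finset, Int.card_Ico_of_le 0 x hx, sub_zero]
  have hcard := ncard_inter_add_ncard_sdiff_eq_ncard (Ico 0 x) T
  rw [countBelow, inter_comm, hgaps]
  omega

end Counting

section FiniteMaximals

variable {S : Set Z2}

lemma notMem_deltaUp_of_mem_af {m s : Z2} (hm : m ∈ Af S) (hs : s ∈ S) : s ∉ DeltaUp m :=
  fun hd => (eq_empty_iff_forall_notMem.1 hm.2) s ⟨hs, hd⟩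

lemma af_injOn_fst (S : Set Z2) : InjOn Prod.fst (Af S) := by
  intro m hm m' hm' h
  by_contra hne
  rcases lt_or_gt_of_ne fun h2 => hne (Prod.ext h h2) with hlt | hlt
  · exact notMem_deltaUp_of_mem_af hm hm'.1 (Or.inl ⟨h.symm, hlt⟩)
  · exact notMem_deltaUp_of_mem_af hm' hm.1 (Or.inl ⟨h, hlt⟩)

/-- The top of a bounded column of `S` is a finite maximal: by (G3), a point of `S` to its right
in the same row would produce a higher point of `S` in the column. -/
lemma exists_mem_af_fst_eq (hG3 : G3P S) {x B : ℤ} (hne : ∃ y, (x, y) ∈ S)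
    (hbd : ∀ y, (x, y) ∈ S → y ≤ B) : ∃ m ∈ Af S, m.1 = x := by
  obtain ⟨ym, hym, hmax⟩ := Int.exists_greatest_of_bdd ⟨B, hbd⟩ hne
  refine ⟨(x, ym), ⟨hym, eq_empty_iff_forall_notMem.2 ?_⟩, rfl⟩
  rintro s ⟨hs, (⟨h1, h2⟩ | ⟨h1, h2⟩)⟩
  · have := hmax s.2 (by rw [← show s.1 = x from h1]; exact hs)
    exact absurd h2 (not_lt.2 this)
  · obtain ⟨e, he, he2, -, he1⟩ :=
      (hG3 (x, ym) hym s hs fun h => h2.ne (congrArg Prod.fst h)).2 h1.symm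
    have hx : e.1 = x := by rw [he1 h2.ne]; exact min_eq_left h2.le
    exact absurd (hmax e.2 (by rw [← hx]; exact he)) (not_le.2 he2)

lemma af_subset_lowerBox {c : Z2} (hcS : ∀ y, c ≤ y → y ∈ S) : Af S ⊆ lowerBox c := by
  intro m hm
  constructor
  · by_contra! hge
    exact notMem_deltaUp_of_mem_af hm (hcS (m.1, max (m.2 + 1) c.2) ⟨hge, le_max_right _ _⟩)
      (Or.inl ⟨rfl, by simp only [lt_max_iff]; omega⟩)
  · by_contra! hge
    exact notMem_deltaUp_of_mem_af hm (hcS (max (m.1 + 1) c.1, m.2) ⟨le_max_right _ _, hge⟩)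
      (Or.inr ⟨rfl, by simp only [lt_max_iff]; omega⟩)

end FiniteMaximals

section Swap

variable {S : Set Z2}

lemma swap_mem_deltaUp_swap {a b : Z2} : b.swap ∈ DeltaUp a.swap ↔ b ∈ DeltaUp a := by
  simp only [DeltaUp, mem_ofPred_eq, Prod.fst_swap, Prod.snd_swap]
  tauto

lemma af_preimage_swap : Af (Prod.swap ⁻¹' S) = Prod.swap ⁻¹' Af S := by
  ext m
  simp only [Af, mem_preimage, mem_ofPred_eq, eq_empty_iff_forall_notMem, mem_inter_iff,
    Prod.swap_surjective.forall (p := fun s => ¬(s ∈ S ∧ s ∈ DeltaUp m.swap)),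
    swap_mem_deltaUp_swap]

lemma minClosed_preimage_swap (h : MinClosed S) : MinClosed (Prod.swap ⁻¹' S) :=
  fun a ha b hb => by simpa only [mem_preimage, Prod.swap_inf] using h _ ha _ hb

lemma g3P_preimage_swap (h : G3P S) : G3P (Prod.swap ⁻¹' S) := by
  intro a ha b hb hne
  obtain ⟨h1, h2⟩ := h _ ha _ hb (Prod.swap_injective.ne hne)
  refine ⟨fun he => ?_, fun he => ?_⟩
  · obtain ⟨e, heS, he1, he2, he3⟩ := h2 he
    exact ⟨e.swap, by simpa using heS, he1, he2, he3⟩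
  · obtain ⟨e, heS, he1, he2, he3⟩ := h1 he
    exact ⟨e.swap, by simpa using heS, he1, he2, he3⟩

lemma image_fst_preimage_swap : Prod.fst '' (Prod.swap ⁻¹' S) = Prod.snd '' S := by
  rw [← image_swap_eq_preimage_swap, image_image]
  rfl

lemma CovIn.swap {a b : Z2} (h : CovIn S a b) : CovIn (Prod.swap ⁻¹' S) a.swap b.swap :=
  ⟨Prod.swap_lt_swap.2 h.1, fun c hc hbetween => h.2 c.swap hc
    ⟨by simpa using Prod.swap_lt_swap.2 hbetween.1, by simpa using Prod.swap_lt_swap.2 hbetween.2⟩⟩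

end Swap

section Cover

variable {S : Set Z2} {β γ : Z2}

lemma CovIn.eq_or_eq (h : CovIn S β γ) {c : Z2} (hc : c ∈ S) (h1 : β ≤ c) (h2 : c ≤ γ) :
    c = β ∨ c = γ := by
  by_contra! hne
  exact h.2 c hc ⟨lt_of_le_of_ne h1 hne.1.symm, lt_of_le_of_ne h2 hne.2⟩

lemma CovIn.snd_lt_of_fst_mem_Ioo (hmin : MinClosed S) (hγ : γ ∈ S) (h : CovIn S β γ)
    {s : Z2} (hs : s ∈ S) (h1 : β.1 < s.1) (h2 : s.1 < γ.1) : s.2 < β.2 := by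
  by_contra! hge
  have hβγ := Prod.le_def.1 h.1.le
  rcases h.eq_or_eq (hmin s hs γ hγ) (Prod.le_def.2 ⟨by simp only [Prod.fst_inf, le_inf_iff]; omega,
    by simp only [Prod.snd_inf, le_inf_iff]; omega⟩)
    inf_le_right with e | e <;>
    simp only [Prod.ext_iff, Prod.le_def, Prod.fst_inf, Prod.snd_inf, inf_eq_right] at e <;> omega

lemma CovIn.mem_af (hmin : MinClosed S) (hβ : β ∈ S) (hγ : γ ∈ S) (h : CovIn S β γ)
    (h1 : β.1 < γ.1) (h2 : β.2 < γ.2) : β ∈ Af S := by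
  refine ⟨hβ, eq_empty_iff_forall_notMem.2 ?_⟩
  rintro s ⟨hs, hd⟩
  simp only [DeltaUp, mem_ofPred_eq] at hd
  rcases h.eq_or_eq (hmin s hs γ hγ) (Prod.le_def.2 ⟨by simp only [Prod.fst_inf, le_inf_iff]; omega,
    by simp only [Prod.snd_inf, le_inf_iff]; omega⟩)
    inf_le_right with e | e <;>
    simp only [Prod.ext_iff, Prod.le_def, Prod.fst_inf, Prod.snd_inf, inf_eq_right] at e <;> omega

lemma CovIn.image_fst_af_strip (hmin : MinClosed S) (hG3 : G3P S) (hγ : γ ∈ S)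
    (h : CovIn S β γ) :
    Prod.fst '' (Af S ∩ lowerBox γ ∩ {m | β.1 < m.1}) = Prod.fst '' S ∩ Ioo β.1 γ.1 := by
  apply Subset.antisymm
  · rintro _ ⟨m, ⟨⟨hm, hm1, -⟩, hβm⟩, rfl⟩
    exact ⟨mem_image_of_mem _ hm.1, hβm, hm1⟩
  · rintro _ ⟨⟨s, hs, rfl⟩, hs1, hs2⟩
    have hcol : ∀ y, (s.1, y) ∈ S → y < β.2 := fun y hy =>
      h.snd_lt_of_fst_mem_Ioo hmin hγ hy hs1 hs2
    obtain ⟨m, hm, hms⟩ := exists_mem_af_fst_eq hG3 ⟨s.2, hs⟩ fun y hy => (hcol y hy).le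
    have hm2 : m.2 < β.2 := hcol m.2 (by rw [← hms]; exact hm.1)
    have hβγ := Prod.le_def.1 h.1.le
    exact ⟨m, ⟨⟨hm, by omega, by omega⟩, by simp only [mem_ofPred_eq]; omega⟩, hms⟩

lemma CovIn.ncard_af_strip_fst (hmin : MinClosed S) (hG3 : G3P S) (hγ : γ ∈ S)
    (h : CovIn S β γ) :
    (Af S ∩ lowerBox γ ∩ {m | β.1 < m.1}).ncard = (Prod.fst '' S ∩ Ioo β.1 γ.1).ncard := by
  rw [← h.image_fst_af_strip hmin hG3 hγ,
    ((af_injOn_fst S).mono fun m hm => hm.1.1).ncard_image]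

lemma CovIn.ncard_af_strip_snd (hmin : MinClosed S) (hG3 : G3P S) (hγ : γ ∈ S)
    (h : CovIn S β γ) :
    (Af S ∩ lowerBox γ ∩ {m | β.2 < m.2}).ncard = (Prod.snd '' S ∩ Ioo β.2 γ.2).ncard := by
  have hswap := h.swap.ncard_af_strip_fst (minClosed_preimage_swap hmin)
    (g3P_preimage_swap hG3) (by simpa using hγ)
  rw [image_fst_preimage_swap, af_preimage_swap, Prod.fst_swap, Prod.fst_swap] at hswap
  rw [← hswap, ← ncard_preimage_of_injective_subset_range Prod.swap_injective
    (Prod.swap_surjective.range_eq ▸ subset_univ _)]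
  congr 1
  ext m
  simp only [lowerBox, preimage_inter, preimage_ofPred_eq, mem_inter_iff, mem_preimage,
    mem_ofPred_eq, Prod.fst_swap, Prod.snd_swap]
  tauto

lemma af_inter_lowerBox_finite (hsub : S ⊆ orth) (b : Z2) : (Af S ∩ lowerBox b).Finite :=
  (finite_Icc 0 b).subset fun _ hm =>
    ⟨Prod.le_def.2 (hsub hm.1.1), Prod.le_def.2 ⟨hm.2.1.le, hm.2.2.le⟩⟩

lemma af_inter_lowerBox_eq_union (hβ : β ∈ S) (hβγ : β ≤ γ) :
    Af S ∩ lowerBox γ = ((Af S ∩ lowerBox β) ∪ (Af S ∩ lowerBox γ ∩ {β}))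
      ∪ ((Af S ∩ lowerBox γ ∩ {m | β.1 < m.1}) ∪ (Af S ∩ lowerBox γ ∩ {m | β.2 < m.2})) := by
  have hβγ' := Prod.le_def.1 hβγ
  ext m
  constructor
  · rintro ⟨hmA, hm1, hm2⟩
    have hΔ := notMem_deltaUp_of_mem_af hmA hβ
    simp only [DeltaUp, mem_ofPred_eq, not_or, not_and] at hΔ
    simp only [lowerBox, mem_union, mem_inter_iff, mem_singleton_iff, mem_ofPred_eq,
      Prod.ext_iff, hmA, hm1, hm2, true_and]
    omega
  · rintro ((⟨hm, h1, h2⟩ | ⟨hm, -⟩) | (⟨hm, -⟩ | ⟨hm, -⟩))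
    exacts [⟨hm, by omega, by omega⟩, hm, hm, hm]

lemma CovIn.ncard_af_inter_lowerBox_inter_singleton (hmin : MinClosed S) (hβ : β ∈ S)
    (hγ : γ ∈ S) (h : CovIn S β γ) :
    ((Af S ∩ lowerBox γ ∩ {β}).ncard : ℤ) = if β.1 < γ.1 ∧ β.2 < γ.2 then 1 else 0 := by
  split_ifs with hlt
  · have hβA : β ∈ Af S ∩ lowerBox γ := ⟨h.mem_af hmin hβ hγ hlt.1 hlt.2, hlt⟩
    rw [inter_eq_right.2 (singleton_subset_iff.2 hβA), ncard_singleton, Nat.cast_one]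
  · rw [inter_singleton_eq_empty.2 fun hm => hlt hm.2, ncard_empty, Nat.cast_zero]

/-- The finite maximals that enter the box when passing from `β` to `γ`: `β` itself for a
diagonal step, and the tops of the columns and ends of the rows of `S` strictly between. -/
lemma CovIn.ncard_af_lowerBox (hsub : S ⊆ orth) (hmin : MinClosed S) (hG3 : G3P S)
    (hβ : β ∈ S) (hγ : γ ∈ S) (h : CovIn S β γ) :
    ((Af S ∩ lowerBox γ).ncard : ℤ) = (Af S ∩ lowerBox β).ncard
      + (Prod.fst '' S ∩ Ioo β.1 γ.1).ncard + (Prod.snd '' S ∩ Ioo β.2 γ.2).ncard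
      + if β.1 < γ.1 ∧ β.2 < γ.2 then 1 else 0 := by
  have : Finite ↑(Af S ∩ lowerBox γ) := (af_inter_lowerBox_finite hsub γ).to_subtype
  have : Finite ↑(Af S ∩ lowerBox β) := (af_inter_lowerBox_finite hsub β).to_subtype
  have hdisj_low : Disjoint (Af S ∩ lowerBox β) (Af S ∩ lowerBox γ ∩ {β}) :=
    disjoint_left.2 fun m hm hm' => by
      rw [mem_singleton_iff.1 hm'.2] at hm
      exact lt_irrefl _ hm.2.1
  have hdisj_strip : Disjoint (Af S ∩ lowerBox γ ∩ {m | β.1 < m.1})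
      (Af S ∩ lowerBox γ ∩ {m | β.2 < m.2}) :=
    disjoint_left.2 fun m ⟨⟨hmA, hm1, hm2⟩, hb1⟩ ⟨_, hb2⟩ => by
      simp only [mem_ofPred_eq] at hb1 hb2
      exact h.2 m hmA.1 ⟨Prod.lt_iff.2 (Or.inl ⟨hb1, hb2.le⟩),
        Prod.lt_iff.2 (Or.inl ⟨hm1, hm2.le⟩)⟩
  have hdisj : Disjoint (Af S ∩ lowerBox β ∪ Af S ∩ lowerBox γ ∩ {β})
      (Af S ∩ lowerBox γ ∩ {m | β.1 < m.1} ∪ Af S ∩ lowerBox γ ∩ {m | β.2 < m.2}) := by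
    refine disjoint_left.2 fun m hl hr => ?_
    have hmβ : m.1 ≤ β.1 ∧ m.2 ≤ β.2 := by
      rcases hl with ⟨-, h1, h2⟩ | ⟨-, rfl⟩
      exacts [⟨h1.le, h2.le⟩, ⟨le_rfl, le_rfl⟩]
    rcases hr with ⟨-, hr⟩ | ⟨-, hr⟩ <;> simp only [mem_ofPred_eq] at hr <;> omega
  rw [← h.ncard_af_strip_fst hmin hG3 hγ, ← h.ncard_af_strip_snd hmin hG3 hγ,
    ← h.ncard_af_inter_lowerBox_inter_singleton hmin hβ hγ]
  conv_lhs => rw [af_inter_lowerBox_eq_union hβ h.1.le]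
  rw [ncard_union_eq hdisj, ncard_union_eq hdisj_low, ncard_union_eq hdisj_strip]
  push_cast
  ring

lemma CovIn.chainRank_eq (hsub : S ⊆ orth) (hmin : MinClosed S) (hG3 : G3P S)
    (hβ : β ∈ S) (hγ : γ ∈ S) (h : CovIn S β γ) : chainRank S γ = chainRank S β + 1 := by
  have hβγ := Prod.le_def.1 h.1.le
  have hne : β.1 < γ.1 ∨ β.2 < γ.2 := by
    by_contra!
    exact h.1.ne (Prod.ext (by omega) (by omega))
  rw [chainRank, chainRank,
    countBelow_eq_add_ncard_Ioo (hsub hβ).1 hβγ.1 (mem_image_of_mem _ hβ),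
    countBelow_eq_add_ncard_Ioo (hsub hβ).2 hβγ.2 (mem_image_of_mem _ hβ),
    h.ncard_af_lowerBox hsub hmin hG3 hβ hγ]
  split_ifs <;> omega

end Cover

section Chains

variable {E : Set Z2}

lemma isSatChain_zero {a : Z2} (ha : a ∈ E) : IsSatChain E 0 fun _ => a :=
  ⟨fun _ _ => ha, fun _ h => absurd h (Nat.not_lt_zero _), fun _ h => absurd h (Nat.not_lt_zero _)⟩

lemma IsSatChain.cons {n : ℕ} {f : ℕ → Z2} {a : Z2} (hf : IsSatChain E n f) (ha : a ∈ E)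
    (hcov : CovIn E a (f 0)) : IsSatChain E (n + 1) fun | 0 => a | i + 1 => f i := by
  refine ⟨?_, ?_, ?_⟩
  · rintro (_ | i) hi
    exacts [ha, hf.1 i (by omega)]
  · rintro (_ | i) hi
    exacts [hcov.1, hf.2.1 i (by omega)]
  · rintro (_ | i) hi
    exacts [hcov.2, hf.2.2 i (by omega)]

lemma exists_covIn_of_lt {a b : Z2} (hb : b ∈ E) (hab : a < b) :
    ∃ g ∈ E, CovIn E a g ∧ g ≤ b := by
  have hfin : {d ∈ E | a < d ∧ d ≤ b}.Finite :=
    (finite_Icc a b).subset fun d hd => ⟨hd.2.1.le, hd.2.2⟩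
  obtain ⟨g, ⟨hgE, hag, hgb⟩, hgmin⟩ := hfin.exists_minimal ⟨b, hb, hab, le_rfl⟩
  exact ⟨g, hgE, ⟨hag, fun c hc ⟨hac, hcg⟩ =>
    hcg.not_ge (hgmin ⟨hc, hac, hcg.le.trans hgb⟩ hcg.le)⟩, hgb⟩

lemma exists_isSatChain {a b : Z2} (ha : a ∈ E) (hb : b ∈ E) (hab : a ≤ b) :
    ∃ n f, IsSatChain E n f ∧ f 0 = a ∧ f n = b := by
  obtain ⟨k, hk⟩ : ∃ k : ℕ, b.1 + b.2 - (a.1 + a.2) ≤ k := ⟨_, Int.self_le_toNat _⟩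
  induction k generalizing a with
  | zero =>
    have hba := Prod.le_def.1 hab
    exact ⟨0, _, isSatChain_zero ha, rfl, Prod.ext (by omega) (by omega)⟩
  | succ k ih =>
    rcases hab.eq_or_lt with rfl | hlt
    · exact ⟨0, _, isSatChain_zero ha, rfl, rfl⟩
    obtain ⟨g, hg, hag, hgb⟩ := exists_covIn_of_lt hb hlt
    have hsum : a.1 + a.2 < g.1 + g.2 := by
      rcases Prod.lt_iff.1 hag.1 with ⟨h1, h2⟩ | ⟨h1, h2⟩ <;> omega
    obtain ⟨n, f, hf, hf0, hfn⟩ := ih hg hgb (by omega)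
    exact ⟨n + 1, _, hf.cons ha (hf0 ▸ hag), rfl, hfn⟩

lemma IsSatChain.chainRank_eq (hsub : E ⊆ orth) (hmin : MinClosed E) (hG3 : G3P E) {n : ℕ}
    {f : ℕ → Z2} (hf : IsSatChain E n f) :
    ∀ i ≤ n, chainRank E (f i) = chainRank E (f 0) + i := by
  intro i
  induction i with
  | zero => simp
  | succ i ih =>
    intro hi
    rw [CovIn.chainRank_eq hsub hmin hG3 (hf.1 i (by omega)) (hf.1 (i + 1) hi)
      ⟨hf.2.1 i hi, hf.2.2 i hi⟩, ih (by omega)]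
    push_cast
    ring

lemma chainDist_eq_sub (hsub : E ⊆ orth) (hmin : MinClosed E) (hG3 : G3P E) {a b : Z2}
    (ha : a ∈ E) (hb : b ∈ E) (hab : a ≤ b) :
    (chainDist E a b : ℤ) = chainRank E b - chainRank E a := by
  have hlen : ∀ n f, IsSatChain E n f → f 0 = a → f n = b →
      (n : ℤ) = chainRank E b - chainRank E a := by
    intro n f hf hf0 hfn
    have := hf.chainRank_eq hsub hmin hG3 n le_rfl
    rw [hf0, hfn] at this
    omega
  obtain ⟨n₀, f₀, hf₀, h0, hn⟩ := exists_isSatChain ha hb hab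
  have hlengths : {n | ∃ f, IsSatChain E n f ∧ f 0 = a ∧ f n = b} = {n₀} := by
    ext n
    refine ⟨fun ⟨f, hf, hf0, hfn⟩ => ?_, fun hn' => ⟨f₀, hn' ▸ hf₀, h0, hn' ▸ hn⟩⟩
    have := hlen n f hf hf0 hfn
    have := hlen n₀ f₀ hf₀ h0 hn
    simp only [mem_singleton_iff]
    omega
  rw [chainDist, hlengths, csSup_singleton, hlen n₀ f₀ hf₀ h0 hn]

end Chains

section Conductor

variable {S : Set Z2}

lemma minEl_eq_zero (h0 : (0 : Z2) ∈ S) (hsub : S ⊆ orth) : minEl S = 0 :=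
  Prod.ext (IsLeast.csInf_eq ⟨⟨0, h0, rfl⟩, by rintro _ ⟨c, hc, rfl⟩; exact (hsub hc).1⟩)
    (IsLeast.csInf_eq ⟨⟨0, h0, rfl⟩, by rintro _ ⟨c, hc, rfl⟩; exact (hsub hc).2⟩)

lemma chainRank_zero (hsub : S ⊆ orth) : chainRank S 0 = 0 := by
  have hbox : Af S ∩ lowerBox 0 = ∅ :=
    eq_empty_iff_forall_notMem.2 fun m hm => absurd (hsub hm.1.1).1 (not_le.2 hm.2.1)
  simp [chainRank, countBelow, hbox]

lemma chainDist_minEl_eq_chainRank (hsub : S ⊆ orth) (hmin : MinClosed S) (hG3 : G3P S)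
    (h0 : (0 : Z2) ∈ S) {α : Z2} (hα : α ∈ S) :
    (chainDist S (minEl S) α : ℤ) = chainRank S α := by
  rw [minEl_eq_zero h0 hsub, chainDist_eq_sub hsub hmin hG3 h0 hα (Prod.le_def.2 (hsub hα)),
    chainRank_zero hsub, sub_zero]

lemma chainRank_eq_of_conductor_le {c : Z2} (hc0 : 0 ≤ c) (hcS : ∀ y, c ≤ y → y ∈ S)
    {α : Z2} (hα : c ≤ α) :
    chainRank S α = α.1 + α.2 - (gaps (Prod.fst '' S)).ncard - (gaps (Prod.snd '' S)).ncard
      - (Af S).ncard := by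
  have hc : (0 : ℤ) ≤ c.1 ∧ (0 : ℤ) ≤ c.2 := hc0
  have hcα := Prod.le_def.1 hα
  have hfst : ∀ t, α.1 ≤ t → t ∈ Prod.fst '' S := fun t ht =>
    ⟨(t, c.2), hcS _ ⟨by simp only; omega, le_rfl⟩, rfl⟩
  have hsnd : ∀ t, α.2 ≤ t → t ∈ Prod.snd '' S := fun t ht =>
    ⟨(c.1, t), hcS _ ⟨le_rfl, by simp only; omega⟩, rfl⟩
  have hbox : Af S ∩ lowerBox α = Af S := inter_eq_left.2 fun m hm =>
    have hm' := af_subset_lowerBox hcS hm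
    ⟨by have := hm'.1; omega, by have := hm'.2; omega⟩
  rw [chainRank, countBelow_eq_sub_ncard_gaps (by omega) hfst,
    countBelow_eq_sub_ncard_gaps (by omega) hsnd, hbox]
  ring

lemma chainRank_orth {α : Z2} (hα : 0 ≤ α) : chainRank orth α = α.1 + α.2 := by
  have htail : ∀ y : Z2, 0 ≤ y → y ∈ orth := fun y hy => Prod.le_def.1 hy
  have hgaps_fst : gaps (Prod.fst '' orth) = ∅ :=
    eq_empty_iff_forall_notMem.2 fun t ⟨ht, hn⟩ => hn ⟨(t, 0), ⟨ht, le_rfl⟩, rfl⟩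
  have hgaps_snd : gaps (Prod.snd '' orth) = ∅ :=
    eq_empty_iff_forall_notMem.2 fun t ⟨ht, hn⟩ => hn ⟨(0, t), ⟨le_rfl, ht⟩, rfl⟩
  have haf : Af orth = ∅ := eq_empty_iff_forall_notMem.2 fun m hm =>
    absurd hm.1.1 (not_le.2 (af_subset_lowerBox htail hm).1)
  rw [chainRank_eq_of_conductor_le le_rfl htail hα, hgaps_fst, hgaps_snd, haf]
  simp

lemma orth_minClosed : MinClosed orth :=
  fun _ ha _ hb => ⟨le_inf ha.1 hb.1, le_inf ha.2 hb.2⟩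

lemma orth_g3P : G3P orth := by
  intro a ha b hb _
  refine ⟨fun _ => ⟨(a.1 + 1, min a.2 b.2), ?_, ?_, le_rfl, fun _ => rfl⟩,
    fun _ => ⟨(min a.1 b.1, a.2 + 1), ?_, ?_, le_rfl, fun _ => rfl⟩⟩
  all_goals simp only [orth, mem_ofPred_eq] at ha hb ⊢; omega

lemma dist2_eq_of_tail {E F : Set Z2} {c : Z2} {z : ℤ} (hcF : ∀ y, c ≤ y → y ∈ F)
    (h : ∀ α ∈ F, c ≤ α → (chainDist E (minEl E) α : ℤ) - chainDist F (minEl F) α = z) :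
    dist2 E F = z := by
  have hvalues : {z' : ℤ | ∃ β : Z2, ∀ α ∈ F, β ≤ α →
      (chainDist E (minEl E) α : ℤ) - (chainDist F (minEl F) α : ℤ) = z'} = {z} := by
    ext z'
    refine ⟨fun ⟨β, hβ⟩ => ?_, fun hz => ⟨c, fun α hα hcα => hz ▸ h α hα hcα⟩⟩
    have hmem := hcF (β ⊔ c) le_sup_right
    rw [mem_singleton_iff, ← hβ _ hmem le_sup_left, h _ hmem le_sup_right]
  rw [dist2, hvalues, csSup_singleton]

end Conductor

theorem genus_eq_proj_gaps_add_card_finite_maximals_general (S : Set Z2)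
    (hS : IsGood S) :
    genus S = ({x : ℤ | 0 ≤ x ∧ x ∉ Prod.fst '' S}.ncard : ℤ)
            + ({x : ℤ | 0 ≤ x ∧ x ∉ Prod.snd '' S}.ncard : ℤ)
            + ((Af S).ncard : ℤ) := by
  obtain ⟨hsub, h0, -, hmin, ⟨δ, hδ⟩, hG3⟩ := hS
  have hcS : ∀ y, δ ⊔ 0 ≤ y → y ∈ S := fun y hy => hδ y (le_sup_left.trans hy)
  refine dist2_eq_of_tail hcS fun α hα hcα => ?_
  have hα0 : 0 ≤ α := le_sup_right.trans hcα
  rw [chainDist_minEl_eq_chainRank subset_rfl orth_minClosed orth_g3P ⟨le_rfl, le_rfl⟩ (hsub hα),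
    chainDist_minEl_eq_chainRank hsub hmin hG3 h0 hα, chainRank_orth hα0,
    chainRank_eq_of_conductor_le le_sup_right hcS hcα, gaps, gaps]
  ring

/-- For a local good semigroup `S ⊆ ℕ²` with coordinate
projections `S₁, S₂`, one has `g(S) = g(S₁) + g(S₂) + |A_f(S)|`. -/
theorem genus_eq_proj_gaps_add_card_finite_maximals (S : Set Z2)
    (hS : IsGood S) (hl : IsLocal S) :
    genus S = ({x : ℤ | 0 ≤ x ∧ x ∉ Prod.fst '' S}.ncard : ℤ)
            + ({x : ℤ | 0 ≤ x ∧ x ∉ Prod.snd '' S}.ncard : ℤ)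
            + ((Af S).ncard : ℤ) :=
  genus_eq_proj_gaps_add_card_finite_maximals_general S hS
end

section
/- Let S ⊆ ℕ² be a local good semigroup and let T = T((α₁,…,α_n)) be a track in S. Then S' = S∖T is a good semigroup strictly contained in S. -/
/-- The space `(ℕ ∪ {∞})²`, modelled inside `(ℤ ∪ {∞})²`. -/
abbrev Om : Type := WithTop ℤ × WithTop ℤ

/-- The embedding of `ℤ²` into `(ℤ ∪ {∞})²`. -/
def iotaZ (a : Z2) : Om := ((a.1 : WithTop ℤ), (a.2 : WithTop ℤ))

/-- `S^∞`: the elements `(a,∞)` with `(a,c₂) ∈ S` and `(∞,b)` with `(c₁,b) ∈ S`,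
where `(c₁,c₂)` is the conductor of `S`. -/
noncomputable def Sinf (S : Set Z2) : Set Om :=
  {w : Om | (∃ a : ℤ, w = ((a : WithTop ℤ), ⊤) ∧ (a, (condE S).2) ∈ S) ∨
            (∃ b : ℤ, w = (⊤, (b : WithTop ℤ)) ∧ ((condE S).1, b) ∈ S)}

/-- `Γ_S = S ∪ S^∞`. -/
noncomputable def Gam (S : Set Z2) : Set Om := iotaZ '' S ∪ Sinf S

/-- `I(S)`: the set of irreducible elements of `Γ_S`. -/
noncomputable def ISet (S : Set Z2) : Set Om :=
  {w ∈ Gam S | w ≠ 0 ∧ ∀ b ∈ Gam S, ∀ c ∈ Gam S, w = b + c → w = b ∨ w = c}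

/-- `I_A(S)`: the irreducible maximals, i.e. irreducible elements of
`A(S) = A_f(S) ∪ S^∞`. -/
noncomputable def IA (S : Set Z2) : Set Om := ISet S ∩ (iotaZ '' Af S ∪ Sinf S)

/-- `₁Δ(w)` (as a subset of `ℤ²`), including the conventions for infinite `w`. -/
def lowD1 (w : Om) : Set Z2 :=
  {b : Z2 | (b.1 : WithTop ℤ) = w.1 ∧ (b.2 : WithTop ℤ) < w.2}

/-- `₂Δ(w)` (as a subset of `ℤ²`), including the conventions for infinite `w`. -/
def lowD2 (w : Om) : Set Z2 :=
  {b : Z2 | (b.2 : WithTop ℤ) = w.2 ∧ (b.1 : WithTop ℤ) < w.1}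

/-- `Δ(w)` (as a subset of `ℤ²`) for a possibly infinite `w`. -/
def upD (w : Om) : Set Z2 :=
  {b : Z2 | ((b.1 : WithTop ℤ) = w.1 ∧ w.2 < (b.2 : WithTop ℤ)) ∨
            ((b.2 : WithTop ℤ) = w.2 ∧ w.1 < (b.1 : WithTop ℤ))}

/-- `{w} ∩ ℤ²`: the singleton of `w` if `w` is finite, `∅` otherwise. -/
def finPart (w : Om) : Set Z2 := {b : Z2 | iotaZ b = w}

/-- `a` and `b` are connected by a piece of track. -/
def Piece (S : Set Z2) (a b : Om) : Prop :=
  ¬ a ≤ b ∧ ¬ b ≤ a ∧ ∀ s ∈ S, s ∈ upD (a ⊓ b) → iotaZ s ∈ ISet S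

/-- The data `α 0, …, α (n-1)` of a track of `S` (with `n ≥ 1` points;
`n = 1` gives the one-point tracks `T((α))`). -/
def TrackData (S : Set Z2) (n : ℕ) (α : ℕ → Om) : Prop :=
  1 ≤ n ∧ (∀ i < n, α i ∈ IA S) ∧
  (∀ i j, i < j → j < n → (α i).1 < (α j).1) ∧
  (∀ s ∈ S, s ∈ lowD2 (α 0) → iotaZ s ∈ ISet S) ∧
  (∀ s ∈ S, s ∈ lowD1 (α (n - 1)) → iotaZ s ∈ ISet S) ∧
  (∀ i, i + 1 < n → Piece S (α i) (α (i + 1)))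

/-- The track `T((α 0,…,α (n-1)))` as a subset of `S`. -/
def trackSet (S : Set Z2) (n : ℕ) (α : ℕ → Om) : Set Z2 :=
  finPart (α 0) ∪ S ∩ lowD2 (α 0) ∪
  (⋃ i ∈ Finset.range (n - 1), S ∩ upD (α i ⊓ α (i + 1))) ∪
  S ∩ lowD1 (α (n - 1)) ∪ finPart (α (n - 1))

/-- `T` is a track of `S`. -/
def IsTrack (S T : Set Z2) : Prop :=
  ∃ (n : ℕ) (α : ℕ → Om), TrackData S n α ∧ T = trackSet S n α

/-- `T` is a beyond track of `S`: a track meeting `{a ∈ S : a ≥ c(S)}`. -/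
noncomputable def IsBeyondTrack (S T : Set Z2) : Prop :=
  IsTrack S T ∧ (T ∩ {a ∈ S | condE S ≤ a}).Nonempty

/-- `S` is a special parent of `S'`: `S` is a (local) good semigroup and
`S' = S ∖ T` for some beyond track `T` of `S`. -/
noncomputable def SpecialParent (S S' : Set Z2) : Prop :=
  IsGood S ∧ IsLocal S ∧ ∃ T : Set Z2, IsBeyondTrack S T ∧ S' = S \ T

/-!
A track `T` of `S` is `S ∩ stair n α` for the staircase `stair n α` with outer corners
`α 0, …, α (n-1)` and excluded inner corners `((α i).1, (α (i+1)).2)`: the `α i` are maximals of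
`S`, so `S` has no point beyond them on their rows and columns. The points of `T` are irreducible,
so `S ∖ T` stays closed under addition; `T` is bounded in one coordinate, so `S ∖ T` keeps a
conductor; and if `x ⊓ y` lies on the staircase, so does whichever of `x`, `y` shares its row or
column, which gives (G1).

For (G3), let `x, y ∉ T` lie on one column with `x.2 < y.2`. If `x` is on the row of a corner
`α (k+1)`, it lies left of the inner corner `((α k).1, x.2)`, a point of `S` off the staircase.
Otherwise that row meets the staircase in at most one point, on the column of some `α j`; if the
(G3)-witness in `S` is that point, (G3) applied to it and a higher point of `S` on the same column
gives a witness past the staircase. Points on one row are handled symmetrically.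
-/

lemma iotaZ_injective : Function.Injective iotaZ := fun a b h => by
  simp only [iotaZ, Prod.ext_iff, WithTop.coe_inj] at h
  exact Prod.ext h.1 h.2

lemma iotaZ_add (a b : Z2) : iotaZ (a + b) = iotaZ a + iotaZ b := by
  simp [iotaZ]

namespace G3P

variable {E : Set Z2} {x y : Z2}

lemma exists_right (h : G3P E) (hx : x ∈ E) (hy : y ∈ E) (h1 : x.1 = y.1) (h2 : x.2 < y.2) :
    ∃ e ∈ E, e.2 = x.2 ∧ x.1 < e.1 := by
  obtain ⟨e, he, he1, -, he2⟩ := (h x hx y hy (ne_of_apply_ne Prod.snd h2.ne)).1 h1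
  exact ⟨e, he, (he2 h2.ne).trans (min_eq_left h2.le), he1⟩

lemma exists_above (h : G3P E) (hx : x ∈ E) (hy : y ∈ E) (h2 : x.2 = y.2) (h1 : x.1 < y.1) :
    ∃ e ∈ E, e.1 = x.1 ∧ x.2 < e.2 := by
  obtain ⟨e, he, he2, -, he1⟩ := (h x hx y hy (ne_of_apply_ne Prod.fst h1.ne)).2 h2
  exact ⟨e, he, (he1 h1.ne).trans (min_eq_left h1.le), he2⟩

lemma of_exists_right_of_exists_above
    (hr : ∀ x ∈ E, ∀ y ∈ E, x.1 = y.1 → x.2 < y.2 → ∃ e ∈ E, e.2 = x.2 ∧ x.1 < e.1)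
    (ha : ∀ x ∈ E, ∀ y ∈ E, x.2 = y.2 → x.1 < y.1 → ∃ e ∈ E, e.1 = x.1 ∧ x.2 < e.2) :
    G3P E := by
  intro a haE b hbE hab
  constructor
  · intro h1
    have h2 : a.2 ≠ b.2 := fun h2 => hab (Prod.ext h1 h2)
    rcases h2.lt_or_gt with h2 | h2
    · obtain ⟨e, he, he2, he1⟩ := hr a haE b hbE h1 h2
      exact ⟨e, he, he1, by omega, fun _ => by omega⟩
    · obtain ⟨e, he, he2, he1⟩ := hr b hbE a haE h1.symm h2
      exact ⟨e, he, by omega, by omega, fun _ => by omega⟩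
  · intro h2
    have h1 : a.1 ≠ b.1 := fun h1 => hab (Prod.ext h1 h2)
    rcases h1.lt_or_gt with h1 | h1
    · obtain ⟨e, he, he1, he2⟩ := ha a haE b hbE h2 h1
      exact ⟨e, he, he2, by omega, fun _ => by omega⟩
    · obtain ⟨e, he, he1, he2⟩ := ha b hbE a haE h2.symm h1
      exact ⟨e, he, by omega, by omega, fun _ => by omega⟩

end G3P

lemma MinClosed.diff {S P : Set Z2} (hS : MinClosed S)
    (hP : ∀ x y : Z2, x ⊓ y ∈ P → x ∈ P ∨ y ∈ P) : MinClosed (S \ P) :=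
  fun x hx y hy => ⟨hS x hx.1 y hy.1, fun h => (hP x y h).elim hx.2 hy.2⟩

lemma add_mem_diff_of_irreducible {S P : Set Z2} (hadd : ∀ a ∈ S, ∀ b ∈ S, a + b ∈ S)
    (hP : ∀ t ∈ S ∩ P, iotaZ t ∈ ISet S) {x y : Z2} (hx : x ∈ S \ P) (hy : y ∈ S \ P) :
    x + y ∈ S \ P := by
  refine ⟨hadd x hx.1 y hy.1, fun h => ?_⟩
  have hGam : ∀ s ∈ S, iotaZ s ∈ Gam S := fun s hs => Or.inl ⟨s, hs, rfl⟩
  rcases (hP _ ⟨hadd x hx.1 y hy.1, h⟩).2.2 _ (hGam x hx.1) _ (hGam y hy.1) (iotaZ_add x y)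
    with h' | h'
  · exact hx.2 (iotaZ_injective h' ▸ h)
  · exact hy.2 (iotaZ_injective h' ▸ h)

lemma exists_conductor_diff_of_bounded {S P : Set Z2} (hS : ∃ δ : Z2, ∀ y : Z2, δ ≤ y → y ∈ S)
    (hP : ∃ B : ℤ, ∀ t ∈ P, t.1 ≤ B ∨ t.2 ≤ B) :
    ∃ δ : Z2, ∀ y : Z2, δ ≤ y → y ∈ S \ P := by
  obtain ⟨δ, hδ⟩ := hS
  obtain ⟨B, hB⟩ := hP
  refine ⟨(max δ.1 (B + 1), max δ.2 (B + 1)), fun y hy' => ?_⟩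
  obtain ⟨h1, h2⟩ := Prod.le_def.1 hy'
  refine ⟨hδ y (Prod.le_def.2 ⟨le_of_max_le_left h1, le_of_max_le_left h2⟩), fun hy => ?_⟩
  have := hB y hy
  omega

namespace IsGood

variable {S : Set Z2}

lemma minClosed (hS : IsGood S) : MinClosed S := hS.2.2.2.1

lemma g3P (hS : IsGood S) : G3P S := hS.2.2.2.2.2

lemma conductor_nonneg (hS : IsGood S) {δ : Z2} (hδ : ∀ y : Z2, δ ≤ y → y ∈ S) :
    0 ≤ δ.1 ∧ 0 ≤ δ.2 :=
  ⟨(hS.1 (hδ (δ.1, max δ.2 0) (Prod.le_def.2 ⟨le_rfl, le_max_left _ _⟩))).1,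
    (hS.1 (hδ (max δ.1 0, δ.2) (Prod.le_def.2 ⟨le_max_left _ _, le_rfl⟩))).2⟩

lemma exists_conductor_fst_eq (hS : IsGood S) :
    ∃ δ : Z2, (∀ y : Z2, δ ≤ y → y ∈ S) ∧ δ.1 = (condE S).1 := by
  obtain ⟨δ₀, hδ₀⟩ := hS.2.2.2.2.1
  exact Int.csInf_mem (s := (fun δ : Z2 => δ.1) '' {δ | ∀ y : Z2, δ ≤ y → y ∈ S})
    ⟨δ₀.1, δ₀, hδ₀, rfl⟩ ⟨0, by rintro _ ⟨δ, hδ, rfl⟩; exact (hS.conductor_nonneg hδ).1⟩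

lemma exists_conductor_snd_eq (hS : IsGood S) :
    ∃ δ : Z2, (∀ y : Z2, δ ≤ y → y ∈ S) ∧ δ.2 = (condE S).2 := by
  obtain ⟨δ₀, hδ₀⟩ := hS.2.2.2.2.1
  exact Int.csInf_mem (s := (fun δ : Z2 => δ.2) '' {δ | ∀ y : Z2, δ ≤ y → y ∈ S})
    ⟨δ₀.2, δ₀, hδ₀, rfl⟩ ⟨0, by rintro _ ⟨δ, hδ, rfl⟩; exact (hS.conductor_nonneg hδ).2⟩

/-- Each step uses (G3) with a point of the row to the right of the conductor. -/
lemma exists_mem_snd_gt (hS : IsGood S) {x : ℤ} (hx : (x, (condE S).2) ∈ S) (N : ℤ) :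
    ∃ y, N < y ∧ (x, y) ∈ S := by
  obtain ⟨δ, hδ, hδ2⟩ := hS.exists_conductor_snd_eq
  have climb : ∀ k : ℕ, ∃ y, (condE S).2 + k ≤ y ∧ (x, y) ∈ S := by
    intro k
    induction k with
    | zero => exact ⟨_, by simp, hx⟩
    | succ k ih =>
      obtain ⟨y, hy, hyS⟩ := ih
      have hz : (max δ.1 (x + 1), y) ∈ S := hδ _ ⟨le_max_left _ _, by omega⟩
      obtain ⟨e, he, he1, he2⟩ := hS.g3P.exists_above hyS hz rfl (by simp)
      exact ⟨e.2, by push_cast at hy ⊢; omega, (Prod.ext he1 rfl : e = (x, e.2)) ▸ he⟩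
  obtain ⟨y, hy, hyS⟩ := climb (N + 1 - (condE S).2).toNat
  exact ⟨y, by omega, hyS⟩

lemma exists_mem_fst_gt (hS : IsGood S) {y : ℤ} (hy : ((condE S).1, y) ∈ S) (N : ℤ) :
    ∃ x, N < x ∧ (x, y) ∈ S := by
  obtain ⟨δ, hδ, hδ1⟩ := hS.exists_conductor_fst_eq
  have climb : ∀ k : ℕ, ∃ x, (condE S).1 + k ≤ x ∧ (x, y) ∈ S := by
    intro k
    induction k with
    | zero => exact ⟨_, by simp, hy⟩
    | succ k ih =>
      obtain ⟨x, hx, hxS⟩ := ih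
      have hz : (x, max δ.2 (y + 1)) ∈ S := hδ _ ⟨by omega, le_max_left _ _⟩
      obtain ⟨e, he, he2, he1⟩ := hS.g3P.exists_right hxS hz rfl (by simp)
      exact ⟨e.1, by push_cast at hx ⊢; omega, (Prod.ext rfl he2 : e = (e.1, y)) ▸ he⟩
  obtain ⟨x, hx, hxS⟩ := climb (N + 1 - (condE S).1).toNat
  exact ⟨x, by omega, hxS⟩

end IsGood

/-- The set `A(S) = A_f(S) ∪ S^∞` of maximals of `S`. -/
def maxElems (S : Set Z2) : Set Om := iotaZ '' Af S ∪ Sinf S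

section MaxElems

variable {S : Set Z2} {w : Om}

lemma mem_of_iotaZ_mem_maxElems {t : Z2} (h : iotaZ t ∈ maxElems S) : t ∈ S := by
  rcases h with ⟨p, hp, hpt⟩ | ⟨a, h, -⟩ | ⟨b, h, -⟩
  · exact iotaZ_injective hpt ▸ hp.1
  · exact absurd (congrArg Prod.snd h) WithTop.coe_ne_top
  · exact absurd (congrArg Prod.fst h) WithTop.coe_ne_top

lemma exists_mem_of_mem_maxElems (hw : w ∈ maxElems S) :
    ∃ s ∈ S, (s.1 : WithTop ℤ) = w.1 ∨ (s.2 : WithTop ℤ) = w.2 := by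
  rcases hw with ⟨p, hp, rfl⟩ | ⟨a, rfl, ha⟩ | ⟨b, rfl, hb⟩
  · exact ⟨p, hp.1, Or.inl rfl⟩
  · exact ⟨_, ha, Or.inl rfl⟩
  · exact ⟨_, hb, Or.inr rfl⟩

lemma snd_le_of_mem_maxElems (hw : w ∈ maxElems S) {s : Z2} (hs : s ∈ S)
    (h : (s.1 : WithTop ℤ) = w.1) : (s.2 : WithTop ℤ) ≤ w.2 := by
  rcases hw with ⟨p, hp, rfl⟩ | ⟨a, rfl, -⟩ | ⟨b, rfl, -⟩
  · by_contra! h2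
    exact Set.eq_empty_iff_forall_notMem.1 hp.2 s
      ⟨hs, Or.inl ⟨WithTop.coe_inj.1 h, WithTop.coe_lt_coe.1 h2⟩⟩
  · exact le_top
  · exact absurd h WithTop.coe_ne_top

lemma fst_le_of_mem_maxElems (hw : w ∈ maxElems S) {s : Z2} (hs : s ∈ S)
    (h : (s.2 : WithTop ℤ) = w.2) : (s.1 : WithTop ℤ) ≤ w.1 := by
  rcases hw with ⟨p, hp, rfl⟩ | ⟨a, rfl, -⟩ | ⟨b, rfl, -⟩
  · by_contra! h1
    exact Set.eq_empty_iff_forall_notMem.1 hp.2 s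
      ⟨hs, Or.inr ⟨WithTop.coe_inj.1 h, WithTop.coe_lt_coe.1 h1⟩⟩
  · exact absurd h WithTop.coe_ne_top
  · exact le_top

lemma exists_mem_snd_gt_of_mem_maxElems (hS : IsGood S) (hw : w ∈ maxElems S) {x N : ℤ}
    (hx : w.1 = x) (hN : (N : WithTop ℤ) < w.2) : ∃ y, N < y ∧ (x, y) ∈ S := by
  rcases hw with ⟨p, hp, rfl⟩ | ⟨a, rfl, ha⟩ | ⟨b, rfl, -⟩
  · obtain rfl : p.1 = x := WithTop.coe_inj.1 hx
    exact ⟨p.2, WithTop.coe_lt_coe.1 hN, hp.1⟩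
  · obtain rfl : a = x := WithTop.coe_inj.1 hx
    exact hS.exists_mem_snd_gt ha N
  · exact absurd hx.symm WithTop.coe_ne_top

lemma exists_mem_fst_gt_of_mem_maxElems (hS : IsGood S) (hw : w ∈ maxElems S) {y N : ℤ}
    (hy : w.2 = y) (hN : (N : WithTop ℤ) < w.1) : ∃ x, N < x ∧ (x, y) ∈ S := by
  rcases hw with ⟨p, hp, rfl⟩ | ⟨a, rfl, -⟩ | ⟨b, rfl, hb⟩
  · obtain rfl : p.2 = y := WithTop.coe_inj.1 hy
    exact ⟨p.1, WithTop.coe_lt_coe.1 hN, hp.1⟩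
  · exact absurd hy.symm WithTop.coe_ne_top
  · obtain rfl : b = y := WithTop.coe_inj.1 hy
    exact hS.exists_mem_fst_gt hb N

end MaxElems

/-- The staircase through the outer corners `α 0, …, α (n-1)`: the column of `α j` above the inner
corner `((α j).1, (α (j+1)).2)`, and the row of `α i` right of the inner corner
`((α (i-1)).1, (α i).2)`. -/
def stair (n : ℕ) (α : ℕ → Om) : Set Z2 :=
  {t | ∃ j < n, (t.1 : WithTop ℤ) = (α j).1 ∧ (j + 1 < n → (α (j + 1)).2 < t.2)} ∪
  {t | ∃ i < n, (t.2 : WithTop ℤ) = (α i).2 ∧ (0 < i → (α (i - 1)).1 < t.1)}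

section Stair

variable {n : ℕ} {α : ℕ → Om}

lemma mem_or_mem_stair_of_inf_mem {x y : Z2} (h : x ⊓ y ∈ stair n α) :
    x ∈ stair n α ∨ y ∈ stair n α := by
  rcases h with ⟨j, hj, h1, h2⟩ | ⟨i, hi, h2, h1⟩
  · rcases le_total x.1 y.1 with hxy | hxy
    · refine Or.inl (Or.inl ⟨j, hj, ?_, fun hj' => (h2 hj').trans_le ?_⟩)
      · rwa [← inf_eq_left.2 hxy]
      · exact_mod_cast (inf_le_left : x.2 ⊓ y.2 ≤ x.2)
    · refine Or.inr (Or.inl ⟨j, hj, ?_, fun hj' => (h2 hj').trans_le ?_⟩)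
      · rwa [← inf_eq_right.2 hxy]
      · exact_mod_cast (inf_le_right : x.2 ⊓ y.2 ≤ y.2)
  · rcases le_total x.2 y.2 with hxy | hxy
    · refine Or.inl (Or.inr ⟨i, hi, ?_, fun hi' => (h1 hi').trans_le ?_⟩)
      · rwa [← inf_eq_left.2 hxy]
      · exact_mod_cast (inf_le_left : x.1 ⊓ y.1 ≤ x.1)
    · refine Or.inr (Or.inr ⟨i, hi, ?_, fun hi' => (h1 hi').trans_le ?_⟩)
      · rwa [← inf_eq_right.2 hxy]
      · exact_mod_cast (inf_le_right : x.1 ⊓ y.1 ≤ y.1)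

lemma exists_bound_stair (n : ℕ) (α : ℕ → Om) :
    ∃ B : ℤ, ∀ t ∈ stair n α, t.1 ≤ B ∨ t.2 ≤ B := by
  obtain ⟨B, hB⟩ := ((Finset.range n).image
    fun i => max ((α i).1.untopD 0) ((α i).2.untopD 0)).exists_le
  have hBi : ∀ i < n, (α i).1.untopD 0 ≤ B ∧ (α i).2.untopD 0 ≤ B := fun i hi =>
    max_le_iff.1 (hB _ (Finset.mem_image_of_mem _ (Finset.mem_range.2 hi)))
  refine ⟨B, ?_⟩
  rintro t (⟨j, hj, h1, -⟩ | ⟨i, hi, h2, -⟩)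
  · exact Or.inl (by simpa [← h1] using (hBi j hj).1)
  · exact Or.inr (by simpa [← h2] using (hBi i hi).2)

end Stair

namespace TrackData

variable {S : Set Z2} {n : ℕ} {α : ℕ → Om}

lemma mem_maxElems (htd : TrackData S n α) {i : ℕ} (hi : i < n) : α i ∈ maxElems S :=
  (htd.2.1 i hi).2

lemma fst_lt (htd : TrackData S n α) {i j : ℕ} (hij : i < j) (hj : j < n) :
    (α i).1 < (α j).1 :=
  htd.2.2.1 i j hij hj

lemma strictMonoOn_fst (htd : TrackData S n α) : StrictMonoOn (fun i => (α i).1) (Set.Iio n) :=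
  fun _ _ _ hj hij => htd.fst_lt hij hj

lemma strictAntiOn_snd (htd : TrackData S n α) : StrictAntiOn (fun i => (α i).2) (Set.Iio n) := by
  obtain ⟨m, rfl⟩ : ∃ m, n = m + 1 := ⟨n - 1, by have := htd.1; omega⟩
  rw [Set.Iio_add_one_eq_Iic]
  refine strictAntiOn_Iic_of_succ_lt fun i hi => lt_of_not_ge fun h => ?_
  exact (htd.2.2.2.2.2 i (by omega)).1 ⟨(htd.fst_lt (Nat.lt_succ_self i) (by omega)).le, h⟩

lemma snd_lt (htd : TrackData S n α) {i j : ℕ} (hij : i < j) (hj : j < n) :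
    (α j).2 < (α i).2 :=
  htd.strictAntiOn_snd (hij.trans hj) hj hij

lemma mem_upD_inf_iff (htd : TrackData S n α) {i : ℕ} (hi : i + 1 < n) {t : Z2} :
    t ∈ upD (α i ⊓ α (i + 1)) ↔
      ((t.1 : WithTop ℤ) = (α i).1 ∧ (α (i + 1)).2 < t.2) ∨
      ((t.2 : WithTop ℤ) = (α (i + 1)).2 ∧ (α i).1 < t.1) := by
  have h1 : (α i).1 ⊓ (α (i + 1)).1 = (α i).1 :=
    inf_eq_left.2 (htd.fst_lt (Nat.lt_succ_self i) hi).le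
  have h2 : (α i).2 ⊓ (α (i + 1)).2 = (α (i + 1)).2 :=
    inf_eq_right.2 (htd.snd_lt (Nat.lt_succ_self i) hi).le
  simp only [upD, Set.mem_ofPred_eq, Prod.fst_inf, Prod.snd_inf, h1, h2]

lemma iotaZ_mem_ISet (htd : TrackData S n α) {t : Z2} (ht : t ∈ trackSet S n α) :
    iotaZ t ∈ ISet S := by
  have h0 : 0 < n := htd.1
  rcases ht with ((((h | h) | h) | h) | h)
  · exact h ▸ (htd.2.1 0 h0).1
  · exact htd.2.2.2.1 t h.1 h.2
  · obtain ⟨i, hi, hS, hup⟩ := Set.mem_iUnion₂.1 h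
    exact (htd.2.2.2.2.2 i (by have := Finset.mem_range.1 hi; omega)).2.2 t hS hup
  · exact htd.2.2.2.2.1 t h.1 h.2
  · exact h ▸ (htd.2.1 (n - 1) (by omega)).1

/-- The maximality of the corners absorbs the end points and the outer ends of the track. -/
lemma trackSet_eq (htd : TrackData S n α) : trackSet S n α = S ∩ stair n α := by
  have h0 : 0 < n := htd.1
  ext t
  constructor
  · rintro ((((h | ⟨hS, h2, -⟩) | h) | ⟨hS, h1, -⟩) | h)
    · exact ⟨mem_of_iotaZ_mem_maxElems (h ▸ htd.mem_maxElems h0),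
        Or.inr ⟨0, h0, congrArg Prod.snd h, by omega⟩⟩
    · exact ⟨hS, Or.inr ⟨0, h0, h2, by omega⟩⟩
    · obtain ⟨i, hi, hS, hup⟩ := Set.mem_iUnion₂.1 h
      have hi : i + 1 < n := by have := Finset.mem_range.1 hi; omega
      refine ⟨hS, ?_⟩
      rcases (htd.mem_upD_inf_iff hi).1 hup with ⟨h1, h2⟩ | ⟨h2, h1⟩
      · exact Or.inl ⟨i, by omega, h1, fun _ => h2⟩
      · exact Or.inr ⟨i + 1, hi, h2, fun _ => by simpa using h1⟩
    · exact ⟨hS, Or.inl ⟨n - 1, by omega, h1, by omega⟩⟩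
    · exact ⟨mem_of_iotaZ_mem_maxElems (h ▸ htd.mem_maxElems (by omega)),
        Or.inl ⟨n - 1, by omega, congrArg Prod.fst h, by omega⟩⟩
  · rintro ⟨hS, ⟨j, hj, h1, h2⟩ | ⟨i, hi, h2, h1⟩⟩
    · by_cases hj' : j + 1 < n
      · exact Or.inl (Or.inl (Or.inr (Set.mem_iUnion₂.2 ⟨j, Finset.mem_range.2 (by omega),
          hS, (htd.mem_upD_inf_iff hj').2 (Or.inl ⟨h1, h2 hj'⟩)⟩)))
      · obtain rfl : j = n - 1 := by omega
        rcases (snd_le_of_mem_maxElems (htd.mem_maxElems hj) hS h1).lt_or_eq with h2 | h2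
        · exact Or.inl (Or.inr ⟨hS, h1, h2⟩)
        · exact Or.inr (Prod.ext h1 h2)
    · rcases i with _ | k
      · rcases (fst_le_of_mem_maxElems (htd.mem_maxElems hi) hS h2).lt_or_eq with h1 | h1
        · exact Or.inl (Or.inl (Or.inl (Or.inr ⟨hS, h2, h1⟩)))
        · exact Or.inl (Or.inl (Or.inl (Or.inl (Prod.ext h1 h2))))
      · exact Or.inl (Or.inl (Or.inr (Set.mem_iUnion₂.2 ⟨k, Finset.mem_range.2 (by omega),
          hS, (htd.mem_upD_inf_iff hi).2 (Or.inr ⟨h2, by simpa using h1 (by omega)⟩)⟩)))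

lemma corner_mem (hS : IsGood S) (htd : TrackData S n α) {k : ℕ} (hk : k + 1 < n) {a b : ℤ}
    (ha : (α k).1 = a) (hb : (α (k + 1)).2 = b) : (a, b) ∈ S := by
  obtain ⟨y, hy, hyS⟩ := exists_mem_snd_gt_of_mem_maxElems hS (htd.mem_maxElems (by omega)) ha
    (hb ▸ htd.snd_lt (Nat.lt_succ_self k) hk)
  obtain ⟨x, hx, hxS⟩ := exists_mem_fst_gt_of_mem_maxElems hS (htd.mem_maxElems hk) hb
    (ha ▸ htd.fst_lt (Nat.lt_succ_self k) hk)
  have hmin : ((a, y) ⊓ (x, b) : Z2) = (a, b) :=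
    Prod.ext (inf_eq_left.2 hx.le) (inf_eq_right.2 hy.le)
  exact hmin ▸ hS.minClosed _ hyS _ hxS

lemma corner_not_mem_stair (htd : TrackData S n α) {k : ℕ} (hk : k + 1 < n) {a b : ℤ}
    (ha : (α k).1 = a) (hb : (α (k + 1)).2 = b) : (a, b) ∉ stair n α := by
  rintro (⟨j, hj, h1, h2⟩ | ⟨i, hi, h2, h1⟩)
  · obtain rfl : j = k :=
      (htd.strictMonoOn_fst.eq_iff_eq hj (by omega : k < n)).1 (h1.symm.trans ha.symm)
    exact (h2 hk).ne hb
  · obtain rfl : k + 1 = i :=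
      (htd.strictAntiOn_snd.eq_iff_eq hi hk).1 (h2.symm.trans hb.symm)
    exact (h1 (by omega)).ne (by simpa using ha)

lemma exists_right_of_not_mem_stair (hS : IsGood S) (htd : TrackData S n α) {x y : Z2}
    (hx : x ∈ S \ stair n α) (hy : y ∈ S \ stair n α) (h1 : x.1 = y.1) (h2 : x.2 < y.2) :
    ∃ e ∈ S \ stair n α, e.2 = x.2 ∧ x.1 < e.1 := by
  by_cases hrow : ∃ i < n, (x.2 : WithTop ℤ) = (α i).2
  · obtain ⟨i, hi, hxi⟩ := hrow
    have hleft : 0 < i ∧ (x.1 : WithTop ℤ) ≤ (α (i - 1)).1 := by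
      by_contra! h
      exact hx.2 (Or.inr ⟨i, hi, hxi, h⟩)
    obtain ⟨k, rfl⟩ : ∃ k, i = k + 1 := ⟨i - 1, by omega⟩
    simp only [Nat.add_sub_cancel] at hleft
    have hxk : (x.1 : WithTop ℤ) < (α k).1 := hleft.2.lt_of_ne fun h =>
      hy.2 (Or.inl ⟨k, by omega, h1 ▸ h, fun _ => hxi ▸ WithTop.coe_lt_coe.2 h2⟩)
    obtain ⟨a, ha⟩ := WithTop.ne_top_iff_exists.1
      (htd.fst_lt (Nat.lt_succ_self k) hi).ne_top
    refine ⟨(a, x.2), ⟨htd.corner_mem hS hi ha.symm hxi.symm,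
      htd.corner_not_mem_stair hi ha.symm hxi.symm⟩, rfl, ?_⟩
    exact_mod_cast ha ▸ hxk
  · push Not at hrow
    obtain ⟨e₀, he₀, he₀2, he₀1⟩ := hS.g3P.exists_right hx.1 hy.1 h1 h2
    by_cases he₀T : e₀ ∈ stair n α
    swap
    · exact ⟨e₀, ⟨he₀, he₀T⟩, he₀2, he₀1⟩
    rcases he₀T with ⟨j, hj, hj1, hj2⟩ | ⟨i, hi, hi2, -⟩
    swap
    · exact absurd (he₀2 ▸ hi2) (hrow i hi)
    have hR : (e₀.2 : WithTop ℤ) < (α j).2 :=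
      (snd_le_of_mem_maxElems (htd.mem_maxElems hj) he₀ hj1).lt_of_ne (he₀2 ▸ hrow j hj)
    obtain ⟨y', hy', hy'S⟩ :=
      exists_mem_snd_gt_of_mem_maxElems hS (htd.mem_maxElems hj) hj1.symm hR
    obtain ⟨ε, hε, hε2, hε1⟩ := hS.g3P.exists_right he₀ hy'S rfl hy'
    refine ⟨ε, ⟨hε, ?_⟩, hε2.trans he₀2, he₀1.trans hε1⟩
    rintro (⟨k, hk, hk1, -⟩ | ⟨k, hk, hk2, -⟩)
    · have hjk : j < k := (htd.strictMonoOn_fst.lt_iff_lt hj hk).1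
        (by rw [← hj1, ← hk1]; exact_mod_cast hε1)
      have hεk := snd_le_of_mem_maxElems (htd.mem_maxElems hk) hε hk1
      have hkj := (htd.strictAntiOn_snd.le_iff_ge hk (by omega : j + 1 < n)).2 hjk
      have := hj2 (by omega)
      rw [← hε2] at this
      exact (this.trans_le (hεk.trans hkj)).false
    · exact hrow k hk (by rw [← hk2, hε2, he₀2])

lemma exists_above_of_not_mem_stair (hS : IsGood S) (htd : TrackData S n α) {x y : Z2}
    (hx : x ∈ S \ stair n α) (hy : y ∈ S \ stair n α) (h2 : x.2 = y.2) (h1 : x.1 < y.1) :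
    ∃ e ∈ S \ stair n α, e.1 = x.1 ∧ x.2 < e.2 := by
  by_cases hcol : ∃ i < n, (x.1 : WithTop ℤ) = (α i).1
  · obtain ⟨i, hi, hxi⟩ := hcol
    have hbelow : i + 1 < n ∧ (x.2 : WithTop ℤ) ≤ (α (i + 1)).2 := by
      by_contra! h
      exact hx.2 (Or.inl ⟨i, hi, hxi, h⟩)
    have hxk : (x.2 : WithTop ℤ) < (α (i + 1)).2 := hbelow.2.lt_of_ne fun h =>
      hy.2 (Or.inr ⟨i + 1, hbelow.1, h2 ▸ h, fun _ => by simpa [← hxi] using h1⟩)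
    obtain ⟨b, hb⟩ := WithTop.ne_top_iff_exists.1
      (htd.snd_lt (Nat.lt_succ_self i) hbelow.1).ne_top
    refine ⟨(x.1, b), ⟨htd.corner_mem hS hbelow.1 hxi.symm hb.symm,
      htd.corner_not_mem_stair hbelow.1 hxi.symm hb.symm⟩, rfl, ?_⟩
    exact_mod_cast hb ▸ hxk
  · push Not at hcol
    obtain ⟨e₀, he₀, he₀1, he₀2⟩ := hS.g3P.exists_above hx.1 hy.1 h2 h1
    by_cases he₀T : e₀ ∈ stair n α
    swap
    · exact ⟨e₀, ⟨he₀, he₀T⟩, he₀1, he₀2⟩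
    rcases he₀T with ⟨i, hi, hi1, -⟩ | ⟨j, hj, hj2, hj1⟩
    · exact absurd (he₀1 ▸ hi1) (hcol i hi)
    have hC : (e₀.1 : WithTop ℤ) < (α j).1 :=
      (fst_le_of_mem_maxElems (htd.mem_maxElems hj) he₀ hj2).lt_of_ne (he₀1 ▸ hcol j hj)
    obtain ⟨x', hx', hx'S⟩ :=
      exists_mem_fst_gt_of_mem_maxElems hS (htd.mem_maxElems hj) hj2.symm hC
    obtain ⟨ε, hε, hε1, hε2⟩ := hS.g3P.exists_above he₀ hx'S rfl hx'
    refine ⟨ε, ⟨hε, ?_⟩, hε1.trans he₀1, he₀2.trans hε2⟩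
    rintro (⟨k, hk, hk1, -⟩ | ⟨k, hk, hk2, -⟩)
    · exact hcol k hk (by rw [← hk1, hε1, he₀1])
    · have hkj : k < j := (htd.strictAntiOn_snd.lt_iff_gt hj hk).1
        (by rw [← hj2, ← hk2]; exact_mod_cast hε2)
      have hεk := fst_le_of_mem_maxElems (htd.mem_maxElems hk) hε hk2
      have hjk := (htd.strictMonoOn_fst.le_iff_le hk (by omega : j - 1 < n)).2
        (by omega : k ≤ j - 1)
      have := hj1 (by omega)
      rw [← hε1] at this
      exact (this.trans_le (hεk.trans hjk)).false

lemma inter_stair_nonempty (hS : IsGood S) (htd : TrackData S n α) :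
    (S ∩ stair n α).Nonempty := by
  have h0 : 0 < n := htd.1
  rcases Nat.lt_or_ge 1 n with hn | hn
  · obtain ⟨a, ha⟩ := WithTop.ne_top_iff_exists.1
      (htd.fst_lt zero_lt_one hn).ne_top
    obtain ⟨b, hb⟩ := WithTop.ne_top_iff_exists.1
      (htd.snd_lt zero_lt_one hn).ne_top
    obtain ⟨y, hy, hyS⟩ := exists_mem_snd_gt_of_mem_maxElems hS (htd.mem_maxElems h0) ha.symm
      (hb ▸ htd.snd_lt zero_lt_one hn)
    exact ⟨(a, y), hyS, Or.inl ⟨0, h0, ha, fun _ => hb ▸ WithTop.coe_lt_coe.2 hy⟩⟩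
  · obtain ⟨s, hs, h | h⟩ := exists_mem_of_mem_maxElems (htd.mem_maxElems h0)
    · exact ⟨s, hs, Or.inl ⟨0, h0, h, by omega⟩⟩
    · exact ⟨s, hs, Or.inr ⟨0, h0, h, by omega⟩⟩

end TrackData

theorem good_of_remove_track_general (S T : Set Z2) (hS : IsGood S) (hT : IsTrack S T) :
    IsGood (S \ T) ∧ S \ T ⊂ S := by
  obtain ⟨n, α, htd, rfl⟩ := hT
  have hirr : ∀ t ∈ S ∩ stair n α, iotaZ t ∈ ISet S := fun t ht =>
    htd.iotaZ_mem_ISet (htd.trackSet_eq ▸ ht)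
  rw [htd.trackSet_eq, Set.sdiff_self_inter]
  have ⟨hSorth, h0, hadd, hmin, hcond, _⟩ := hS
  refine ⟨⟨Set.sdiff_subset.trans hSorth, ⟨h0, fun h => (hirr 0 ⟨h0, h⟩).2.1 rfl⟩,
    fun x hx y hy => add_mem_diff_of_irreducible hadd hirr hx hy,
    hmin.diff fun _ _ => mem_or_mem_stair_of_inf_mem,
    exists_conductor_diff_of_bounded hcond (exists_bound_stair n α),
    G3P.of_exists_right_of_exists_above
      (fun _ hx _ hy => htd.exists_right_of_not_mem_stair hS hx hy)
      (fun _ hx _ hy => htd.exists_above_of_not_mem_stair hS hx hy)⟩,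
    Set.sdiff_ssubset_left_iff.2 (htd.inter_stair_nonempty hS)⟩

/-- Removing a track `T` from a local good semigroup `S ⊆ ℕ²`
yields a good semigroup `S∖T` strictly contained in `S`. -/
theorem good_of_remove_track (S T : Set Z2) (hS : IsGood S) (hl : IsLocal S)
    (hT : IsTrack S T) :
    IsGood (S \ T) ∧ S \ T ⊂ S :=
  good_of_remove_track_general S T hS hT
end
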